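/- arXiv:2511.19784 — 5 statements merged into one kernel-verified Lean document; each statement's English description precedes it below -/
import Mathlib

section
/- For two empirical fibred measures μ₁ = ½(δ_{(ω₁,x₁)} + δ_{(ω₂,x₂)}) and μ₂ = ½(δ_{(ω₁,x₂)} + δ_{(ω₂,x₁)}) with common label marginal π = ½(δ_{ω₁} + δ_{ω₂}) and ω₁ ≠ ω₂, the classical p-Wasserstein distance equals min{d_Ω(ω₁,ω₂), ‖x₁−x₂‖_X}, while the fibred p-Wasserstein distance equals ‖x₁−x₂‖_X. -/
open MeasureTheory ENNReal Filter Topology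

noncomputable section

/-- The set of transport plans (couplings) between two measures on `α`. -/
def Couplings {α : Type*} [MeasurableSpace α] (μ ν : Measure α) :
    Set (Measure (α × α)) :=
  {γ | γ.map Prod.fst = μ ∧ γ.map Prod.snd = ν}

/-- Optimal transport cost between `μ` and `ν` for the cost function `c`. -/
noncomputable def transportCost {α : Type*} [MeasurableSpace α]
    (c : α → α → ℝ≥0∞) (μ ν : Measure α) : ℝ≥0∞ :=
  ⨅ γ ∈ Couplings μ ν, ∫⁻ z, c z.1 z.2 ∂γ

/-- The `p`-Wasserstein distance on a metric measurable space. -/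
noncomputable def Wp {α : Type*} [MeasurableSpace α] [PseudoMetricSpace α]
    (p : ℝ) (μ ν : Measure α) : ℝ≥0∞ :=
  (transportCost (fun x y => ENNReal.ofReal (dist x y ^ p)) μ ν) ^ (1 / p)

/-- The fibred `p`-Wasserstein distance between two fibre families. -/
noncomputable def fibredWp {Ω X : Type*} [MeasurableSpace Ω] [MeasurableSpace X]
    [PseudoMetricSpace X] (p : ℝ) (π : Measure Ω) (μ ν : Ω → Measure X) : ℝ≥0∞ :=
  (∫⁻ ω, Wp p (μ ω) (ν ω) ^ p ∂π) ^ (1 / p)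

/-- The joint measure on `Ω × X` associated with marginal `π` and fibres `μ`. -/
noncomputable def jointMeasure {Ω X : Type*} [MeasurableSpace Ω] [MeasurableSpace X]
    (π : Measure Ω) (μ : Ω → Measure X) : Measure (Ω × X) :=
  π.bind fun ω => (μ ω).map fun x => (ω, x)

/-- The fibred `p`-th moment (raised to the power `p`). -/
noncomputable def fibredMomentP {Ω X : Type*} [MeasurableSpace Ω] [MeasurableSpace X]
    [NormedAddCommGroup X] (p : ℝ) (π : Measure Ω) (μ : Ω → Measure X) : ℝ≥0∞ :=
  ∫⁻ ω, ∫⁻ x, ENNReal.ofReal (‖x‖ ^ p) ∂(μ ω) ∂π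

/-- Average of a fibre family over a set of labels. -/
noncomputable def avgMeasure {Ω X : Type*} [MeasurableSpace Ω] [MeasurableSpace X]
    (π : Measure Ω) (A : Set Ω) (μ : Ω → Measure X) : Measure X :=
  (π A)⁻¹ • (π.restrict A).bind μ

/- ## Auxiliary lemmas -/

lemma lintegral_two_diracs {α : Type*} [MeasurableSpace α] [MeasurableSingletonClass α]
    (f : α → ℝ≥0∞) (a b : α) :
    ∫⁻ x, f x ∂((1/2 : ℝ≥0∞) • Measure.dirac a + (1/2 : ℝ≥0∞) • Measure.dirac b)
      = (1/2) * f a + (1/2) * f b := by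
  simp [lintegral_add_measure, lintegral_smul_measure, lintegral_dirac]

lemma half_add_half (x : ℝ≥0∞) : (1/2 : ℝ≥0∞) * x + (1/2 : ℝ≥0∞) * x = x := by
  rw [← add_mul, one_div, ENNReal.inv_two_add_inv_two, one_mul]

lemma transportCost_le_coupling {α : Type*} [MeasurableSpace α]
    {c : α → α → ℝ≥0∞} {μ ν : Measure α} {γ : Measure (α × α)}
    (hγ : γ ∈ Couplings μ ν) :
    transportCost c μ ν ≤ ∫⁻ z, c z.1 z.2 ∂γ :=
  iInf₂_le γ hγ

lemma le_transportCost {α : Type*} [MeasurableSpace α]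
    (c : α → α → ℝ≥0∞) (μ ν : Measure α) (S T : Set α)
    (hS : MeasurableSet S) (hT : MeasurableSet T)
    (hμS : μ Sᶜ = 0) (hνT : ν Tᶜ = 0) (hμ1 : μ Set.univ = 1)
    (m : ℝ≥0∞) (hc : ∀ x ∈ S, ∀ y ∈ T, m ≤ c x y) :
    m ≤ transportCost c μ ν := by
  refine le_iInf₂ fun γ hγ => ?_
  obtain ⟨h1, h2⟩ := hγ
  have hγS : γ ((S ×ˢ T)ᶜ) = 0 := by
    have hsub : (S ×ˢ T)ᶜ ⊆ (Prod.fst ⁻¹' Sᶜ) ∪ (Prod.snd ⁻¹' Tᶜ) := by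
      intro z hz
      simp only [Set.mem_compl_iff, Set.mem_prod, not_and_or] at hz
      simpa using hz
    have h3 : γ (Prod.fst ⁻¹' Sᶜ) = 0 := by
      rw [← Measure.map_apply measurable_fst hS.compl, h1]; exact hμS
    have h4 : γ (Prod.snd ⁻¹' Tᶜ) = 0 := by
      rw [← Measure.map_apply measurable_snd hT.compl, h2]; exact hνT
    exact measure_mono_null hsub (measure_union_null h3 h4)
  have hγuniv : γ Set.univ = 1 := by
    have := congrArg (fun ρ : Measure α => ρ Set.univ) h1
    simpa [Measure.map_apply measurable_fst MeasurableSet.univ, hμ1] using this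
  have hST : γ (S ×ˢ T) = 1 := by
    have h := measure_add_measure_compl (μ := γ) (hS.prod hT)
    rw [hγS, add_zero, hγuniv] at h
    exact h
  calc m = m * γ (S ×ˢ T) := by rw [hST, mul_one]
    _ = ∫⁻ _ in S ×ˢ T, m ∂γ := (setLIntegral_const _ _).symm
    _ = ∫⁻ z, (S ×ˢ T).indicator (fun _ => m) z ∂γ :=
        (lintegral_indicator (hS.prod hT) _).symm
    _ ≤ ∫⁻ z, c z.1 z.2 ∂γ := lintegral_mono fun z => by
        by_cases hz : z ∈ S ×ˢ T
        · rw [Set.indicator_of_mem hz]; exact hc z.1 hz.1 z.2 hz.2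
        · simp [Set.indicator_of_notMem hz]

lemma transportCost_dirac {α : Type*} [MeasurableSpace α] [MeasurableSingletonClass α]
    (c : α → α → ℝ≥0∞) (a b : α) :
    transportCost c (Measure.dirac a) (Measure.dirac b) = c a b := by
  refine le_antisymm ?_ ?_
  · have hγ : Measure.dirac (a, b) ∈ Couplings (Measure.dirac a) (Measure.dirac b) :=
      ⟨Measure.map_dirac' measurable_fst _, Measure.map_dirac' measurable_snd _⟩
    calc transportCost c (Measure.dirac a) (Measure.dirac b)
        ≤ ∫⁻ z, c z.1 z.2 ∂Measure.dirac (a, b) := transportCost_le_coupling hγ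
      _ = c a b := lintegral_dirac _ _
  · refine le_transportCost c _ _ {a} {b} (measurableSet_singleton a)
      (measurableSet_singleton b) ?_ ?_ (by simp) (c a b) ?_
    · simp
    · simp
    · rintro x rfl y rfl
      exact le_rfl

/-- For the two empirical fibred measures
`μ₁ = ½(δ_{(ω₁,x₁)} + δ_{(ω₂,x₂)})` and `μ₂ = ½(δ_{(ω₁,x₂)} + δ_{(ω₂,x₁)})` with common
label marginal `π = ½(δ_{ω₁} + δ_{ω₂})` and `ω₁ ≠ ω₂`, the classical `p`-Wasserstein
distance (for the `p`-product metric on `Ω × X`) equals `min{d_Ω(ω₁,ω₂), ‖x₁ - x₂‖}`,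
while the fibred `p`-Wasserstein distance equals `‖x₁ - x₂‖`. -/
theorem stmt_1
    {Ω X : Type*} [MeasurableSpace Ω] [MetricSpace Ω] [BorelSpace Ω] [PolishSpace Ω]
    [MeasurableSpace X] [NormedAddCommGroup X] [BorelSpace X]
    [TopologicalSpace.SeparableSpace X]
    (p : ℝ) (hp : 1 ≤ p)
    (ω₁ ω₂ : Ω) (hω : ω₁ ≠ ω₂) (x₁ x₂ : X)
    (π : Measure Ω)
    (hπ : π = (1 / 2 : ℝ≥0∞) • Measure.dirac ω₁ + (1 / 2 : ℝ≥0∞) • Measure.dirac ω₂)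
    (μ1 μ2 : Measure (Ω × X))
    (hμ1 : μ1 = (1 / 2 : ℝ≥0∞) • Measure.dirac (ω₁, x₁)
        + (1 / 2 : ℝ≥0∞) • Measure.dirac (ω₂, x₂))
    (hμ2 : μ2 = (1 / 2 : ℝ≥0∞) • Measure.dirac (ω₁, x₂)
        + (1 / 2 : ℝ≥0∞) • Measure.dirac (ω₂, x₁))
    (μ1f μ2f : Ω → Measure X)
    (h11 : μ1f ω₁ = Measure.dirac x₁) (h12 : μ1f ω₂ = Measure.dirac x₂)
    (h21 : μ2f ω₁ = Measure.dirac x₂) (h22 : μ2f ω₂ = Measure.dirac x₁) :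
    (transportCost
        (fun z w : Ω × X => ENNReal.ofReal (dist z.1 w.1 ^ p + dist z.2 w.2 ^ p))
        μ1 μ2) ^ (1 / p)
      = ENNReal.ofReal (min (dist ω₁ ω₂) (dist x₁ x₂))
    ∧ fibredWp p π μ1f μ2f = ENNReal.ofReal (dist x₁ x₂) := by
  have hp0 : 0 < p := lt_of_lt_of_le one_pos hp
  set D := dist ω₁ ω₂ with hDdef
  set E := dist x₁ x₂ with hEdef
  have hD : 0 ≤ D := dist_nonneg
  have hE : 0 ≤ E := dist_nonneg
  have hz : (0:ℝ) ^ p = 0 := Real.zero_rpow hp0.ne'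
  have hrpow_inv : ∀ x : ℝ, 0 ≤ x → (x ^ p) ^ (1/p) = x := by
    intro x hx
    rw [← Real.rpow_mul hx, mul_one_div, div_self hp0.ne', Real.rpow_one]
  have hofr : ∀ x : ℝ, 0 ≤ x → (ENNReal.ofReal (x ^ p)) ^ (1/p) = ENNReal.ofReal x := by
    intro x hx
    rw [ENNReal.ofReal_rpow_of_nonneg (Real.rpow_nonneg hx p) (by positivity),
      hrpow_inv x hx]
  -- Part 2: Wasserstein distance between Dirac fibres
  have hWd : ∀ a b : X, Wp p (Measure.dirac a) (Measure.dirac b)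
      = ENNReal.ofReal (dist a b) := by
    intro a b
    rw [Wp, transportCost_dirac, hofr _ dist_nonneg]
  have hpart2 : fibredWp p π μ1f μ2f = ENNReal.ofReal E := by
    rw [fibredWp, hπ, lintegral_two_diracs, h11, h12, h21, h22, hWd, hWd,
      dist_comm x₂ x₁, ENNReal.ofReal_rpow_of_nonneg hE hp0.le, half_add_half,
      hofr E hE]
  -- Part 1
  have hmin : ENNReal.ofReal (min D E ^ p)
      = min (ENNReal.ofReal (D ^ p)) (ENNReal.ofReal (E ^ p)) := by
    rcases le_total D E with h | h
    · rw [min_eq_left h,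
        min_eq_left (ENNReal.ofReal_le_ofReal (Real.rpow_le_rpow hD h hp0.le))]
    · rw [min_eq_right h,
        min_eq_right (ENNReal.ofReal_le_ofReal (Real.rpow_le_rpow hE h hp0.le))]
  have hub1 : transportCost
      (fun z w : Ω × X => ENNReal.ofReal (dist z.1 w.1 ^ p + dist z.2 w.2 ^ p)) μ1 μ2
      ≤ ENNReal.ofReal (E ^ p) := by
    have hγ : ((1/2 : ℝ≥0∞) • Measure.dirac ((ω₁,x₁),(ω₁,x₂))
        + (1/2 : ℝ≥0∞) • Measure.dirac ((ω₂,x₂),(ω₂,x₁))) ∈ Couplings μ1 μ2 := by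
      constructor
      · rw [Measure.map_add _ _ measurable_fst, Measure.map_smul, Measure.map_smul,
          Measure.map_dirac' measurable_fst, Measure.map_dirac' measurable_fst, hμ1]
      · rw [Measure.map_add _ _ measurable_snd, Measure.map_smul, Measure.map_smul,
          Measure.map_dirac' measurable_snd, Measure.map_dirac' measurable_snd, hμ2]
    refine le_trans (transportCost_le_coupling hγ) ?_
    rw [lintegral_two_diracs]
    simp only [dist_self, hz, zero_add, dist_comm x₂ x₁]
    rw [half_add_half]
  have hub2 : transportCost
      (fun z w : Ω × X => ENNReal.ofReal (dist z.1 w.1 ^ p + dist z.2 w.2 ^ p)) μ1 μ2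
      ≤ ENNReal.ofReal (D ^ p) := by
    have hγ : ((1/2 : ℝ≥0∞) • Measure.dirac ((ω₁,x₁),(ω₂,x₁))
        + (1/2 : ℝ≥0∞) • Measure.dirac ((ω₂,x₂),(ω₁,x₂))) ∈ Couplings μ1 μ2 := by
      constructor
      · rw [Measure.map_add _ _ measurable_fst, Measure.map_smul, Measure.map_smul,
          Measure.map_dirac' measurable_fst, Measure.map_dirac' measurable_fst, hμ1]
      · rw [Measure.map_add _ _ measurable_snd, Measure.map_smul, Measure.map_smul,
          Measure.map_dirac' measurable_snd, Measure.map_dirac' measurable_snd, hμ2,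
          add_comm]
    refine le_trans (transportCost_le_coupling hγ) ?_
    rw [lintegral_two_diracs]
    simp only [dist_self, hz, add_zero, dist_comm ω₂ ω₁]
    rw [half_add_half]
  have hmn : 0 ≤ min D E := le_min hD hE
  have hlb : ENNReal.ofReal (min D E ^ p) ≤ transportCost
      (fun z w : Ω × X => ENNReal.ofReal (dist z.1 w.1 ^ p + dist z.2 w.2 ^ p))
      μ1 μ2 := by
    refine le_transportCost _ μ1 μ2 {(ω₁,x₁),(ω₂,x₂)} {(ω₁,x₂),(ω₂,x₁)}
      ((measurableSet_singleton _).insert _) ((measurableSet_singleton _).insert _)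
      ?_ ?_ ?_ _ ?_
    · rw [hμ1]; simp [Measure.dirac_apply]
    · rw [hμ2]; simp [Measure.dirac_apply]
    · rw [hμ1]; simp [ENNReal.inv_two_add_inv_two]
    · intro z hzS w hwT
      simp only [Set.mem_insert_iff, Set.mem_singleton_iff] at hzS hwT
      have key1 : ENNReal.ofReal (min D E ^ p) ≤ ENNReal.ofReal (E ^ p) :=
        ENNReal.ofReal_le_ofReal (Real.rpow_le_rpow hmn (min_le_right D E) hp0.le)
      have key2 : ENNReal.ofReal (min D E ^ p) ≤ ENNReal.ofReal (D ^ p) :=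
        ENNReal.ofReal_le_ofReal (Real.rpow_le_rpow hmn (min_le_left D E) hp0.le)
      rcases hzS with rfl | rfl <;> rcases hwT with rfl | rfl <;>
        simp only [dist_self, hz, zero_add, add_zero, dist_comm x₂ x₁,
          dist_comm ω₂ ω₁] <;> assumption
  have hTC : transportCost
      (fun z w : Ω × X => ENNReal.ofReal (dist z.1 w.1 ^ p + dist z.2 w.2 ^ p)) μ1 μ2
      = ENNReal.ofReal (min D E ^ p) := by
    refine le_antisymm ?_ hlb
    rw [hmin]
    exact le_min hub2 hub1
  exact ⟨by rw [hTC, hofr _ hmn], hpart2⟩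

end
end

section
/- If π ∈ P(Ω) is atomless, then the set 𝒢_{π,p}(Ω × X) of fibred measures of the form (Id, x)_♯ π with x ∈ L^p(Ω, X; π) is closed in P_{π,p}(Ω × X) for the fibred p-Wasserstein topology: if μ_n = (Id, x_n)_♯ π converges in W_{π,p} to μ, then μ = (Id, x)_♯ π for some x ∈ L^p(Ω, X; π). -/
open MeasureTheory ENNReal Filter Topology

noncomputable section

section Aux

variable {X : Type*} [MeasurableSpace X] [MetricSpace X] [BorelSpace X]

/-- Measurability of the cost function. -/
lemma measurable_cost [SecondCountableTopology X] (p : ℝ) (hp : 0 ≤ p) :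
    Measurable fun z : X × X => ENNReal.ofReal (dist z.1 z.2 ^ p) := by
  have h : (fun z : X × X => ENNReal.ofReal (dist z.1 z.2 ^ p))
      = fun z : X × X => (ENNReal.ofReal (dist z.1 z.2)) ^ p :=
    funext fun z => (ENNReal.ofReal_rpow_of_nonneg dist_nonneg hp).symm
  rw [h]
  exact (ENNReal.continuous_rpow_const.comp
    (ENNReal.continuous_ofReal.comp (continuous_fst.dist continuous_snd))).measurable

lemma measurable_cost_left [SecondCountableTopology X] (p : ℝ) (hp : 0 ≤ p) (x : X) :
    Measurable fun y : X => ENNReal.ofReal (dist x y ^ p) :=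
  (measurable_cost p hp).comp (measurable_const.prodMk measurable_id)

/-- The transport cost from a Dirac mass is the integral of the cost. -/
lemma transportCost_dirac_s7 [SecondCountableTopology X] (p : ℝ) (hp : 0 ≤ p)
    (x : X) (ν : Measure X) [IsProbabilityMeasure ν] :
    transportCost (fun a b => ENNReal.ofReal (dist a b ^ p)) (Measure.dirac x) ν
      = ∫⁻ y, ENNReal.ofReal (dist x y ^ p) ∂ν := by
  apply le_antisymm
  · have hmem : ν.map (fun y => (x, y)) ∈ Couplings (Measure.dirac x) ν := by
      constructor
      · rw [Measure.map_map measurable_fst measurable_prodMk_left]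
        have : (Prod.fst ∘ fun y : X => (x, y)) = fun _ : X => x := rfl
        rw [this, Measure.map_const]
        simp
      · rw [Measure.map_map measurable_snd measurable_prodMk_left]
        have : (Prod.snd ∘ fun y : X => (x, y)) = id := rfl
        rw [this, Measure.map_id]
    refine le_trans (iInf₂_le _ hmem) ?_
    rw [lintegral_map (measurable_cost p hp) measurable_prodMk_left]
  · refine le_iInf₂ fun γ hγ => le_of_eq ?_
    obtain ⟨h1, h2⟩ := hγ
    have hae : ∀ᵐ z ∂γ, z.1 = x := by
      have h0 : γ.map Prod.fst {x}ᶜ = 0 := by rw [h1]; simp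
      rw [Measure.map_apply measurable_fst (measurableSet_singleton x).compl] at h0
      rw [ae_iff]
      exact h0
    calc ∫⁻ y, ENNReal.ofReal (dist x y ^ p) ∂ν
        = ∫⁻ y, ENNReal.ofReal (dist x y ^ p) ∂(γ.map Prod.snd) := by rw [h2]
      _ = ∫⁻ z, ENNReal.ofReal (dist x z.2 ^ p) ∂γ :=
          lintegral_map (measurable_cost_left p hp x) measurable_snd
      _ = ∫⁻ z, ENNReal.ofReal (dist z.1 z.2 ^ p) ∂γ :=
          lintegral_congr_ae (hae.mono fun z hz => by dsimp only; rw [hz])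
      _ = ∫⁻ z, (fun a b => ENNReal.ofReal (dist a b ^ p)) z.1 z.2 ∂γ := rfl

lemma Wp_dirac_pow [SecondCountableTopology X] (p : ℝ) (hp : 1 ≤ p)
    (x : X) (ν : Measure X) [IsProbabilityMeasure ν] :
    Wp p (Measure.dirac x) ν ^ p = ∫⁻ y, ENNReal.ofReal (dist x y ^ p) ∂ν := by
  have hp0 : p ≠ 0 := by positivity
  rw [Wp, ← ENNReal.rpow_mul, one_div, inv_mul_cancel₀ hp0, ENNReal.rpow_one,
    transportCost_dirac_s7 p (by linarith) x ν]

lemma ennreal_add_rpow_le (p : ℝ) (hp : 0 ≤ p) (u v : ℝ≥0∞) :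
    (u + v) ^ p ≤ 2 ^ p * (u ^ p + v ^ p) := by
  calc (u + v) ^ p ≤ (2 * max u v) ^ p := by
        apply ENNReal.rpow_le_rpow _ hp
        rw [two_mul]
        exact add_le_add (le_max_left u v) (le_max_right u v)
    _ = 2 ^ p * (max u v) ^ p := ENNReal.mul_rpow_of_nonneg _ _ hp
    _ ≤ 2 ^ p * (u ^ p + v ^ p) := by
        apply mul_le_mul_right
        rcases le_total u v with h | h
        · rw [max_eq_right h]; exact le_add_self
        · rw [max_eq_left h]; exact self_le_add_right _ _

/-- If the `p`-cost from a sequence of points to `ν` tends to `0`, then `ν` is a Dirac mass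
and the sequence converges to its location. -/
lemma dirac_of_cost_tendsto_zero [SecondCountableTopology X] (p : ℝ) (hp : 1 ≤ p)
    (ν : Measure X) [IsProbabilityMeasure ν] (a : ℕ → X)
    (h : Tendsto (fun k => ∫⁻ y, ENNReal.ofReal (dist (a k) y ^ p) ∂ν) atTop (𝓝 0)) :
    ∃ y : X, ν = Measure.dirac y ∧ Tendsto a atTop (𝓝 y) := by
  have hp0 : p ≠ 0 := by positivity
  have hp0' : (0:ℝ) ≤ p := by linarith
  set G : ℕ → ℝ≥0∞ := fun k => ∫⁻ y, ENNReal.ofReal (dist (a k) y ^ p) ∂ν with hG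
  set I : ℝ≥0∞ := ∫⁻ y, ∫⁻ y', ENNReal.ofReal (dist y y' ^ p) ∂ν ∂ν with hI
  have hC : ((2:ℝ≥0∞) ^ p) ≠ ⊤ := ENNReal.rpow_ne_top_of_nonneg hp0' (by norm_num)
  -- pointwise bound
  have hpt : ∀ k, ∀ y y' : X, ENNReal.ofReal (dist y y' ^ p)
      ≤ 2 ^ p * (ENNReal.ofReal (dist (a k) y ^ p) + ENNReal.ofReal (dist (a k) y' ^ p)) := by
    intro k y y'
    have e1 : ∀ s : ℝ, 0 ≤ s → ENNReal.ofReal (s ^ p) = ENNReal.ofReal s ^ p :=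
      fun s hs => (ENNReal.ofReal_rpow_of_nonneg hs hp0').symm
    rw [e1 _ dist_nonneg, e1 _ dist_nonneg, e1 _ dist_nonneg]
    have htri : ENNReal.ofReal (dist y y')
        ≤ ENNReal.ofReal (dist (a k) y) + ENNReal.ofReal (dist (a k) y') := by
      rw [← ENNReal.ofReal_add dist_nonneg dist_nonneg]
      exact ENNReal.ofReal_le_ofReal (dist_triangle_left y y' (a k))
    calc ENNReal.ofReal (dist y y') ^ p
        ≤ (ENNReal.ofReal (dist (a k) y) + ENNReal.ofReal (dist (a k) y')) ^ p :=
          ENNReal.rpow_le_rpow htri hp0'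
      _ ≤ 2 ^ p * (ENNReal.ofReal (dist (a k) y) ^ p + ENNReal.ofReal (dist (a k) y') ^ p) :=
          ennreal_add_rpow_le p hp0' _ _
  -- integral bound
  have hIb : ∀ k, I ≤ (2 ^ p * 2) * G k := by
    intro k
    have hm : Measurable fun y : X => ENNReal.ofReal (dist (a k) y ^ p) :=
      measurable_cost_left p hp0' (a k)
    calc I ≤ ∫⁻ y, ∫⁻ y', 2 ^ p * (ENNReal.ofReal (dist (a k) y ^ p)
            + ENNReal.ofReal (dist (a k) y' ^ p)) ∂ν ∂ν := by
          exact lintegral_mono fun y => lintegral_mono fun y' => hpt k y y'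
      _ = ∫⁻ y, 2 ^ p * (ENNReal.ofReal (dist (a k) y ^ p) + G k) ∂ν := by
          apply lintegral_congr fun y => ?_
          rw [lintegral_const_mul _ (hm.const_add _),
            lintegral_add_left measurable_const, lintegral_const, measure_univ, mul_one]
      _ = 2 ^ p * (G k + G k) := by
          rw [lintegral_const_mul _ (hm.add_const _),
            lintegral_add_right _ measurable_const, lintegral_const, measure_univ, mul_one]
      _ = (2 ^ p * 2) * G k := by ring
  have hI0 : I = 0 := by
    refine le_antisymm ?_ zero_le
    have hT : Tendsto (fun k => (2 ^ p * 2) * G k) atTop (𝓝 ((2 ^ p * 2) * 0)) :=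
      ENNReal.Tendsto.const_mul h (Or.inr (ENNReal.mul_ne_top hC (by norm_num)))
    rw [mul_zero] at hT
    exact ge_of_tendsto' hT hIb
  -- ν gives full mass to some point
  have hmI : Measurable fun y : X => ∫⁻ y', ENNReal.ofReal (dist y y' ^ p) ∂ν :=
    Measurable.lintegral_prod_right' (measurable_cost p hp0')
  rw [hI, lintegral_eq_zero_iff hmI] at hI0
  have h2 : ∀ᵐ y ∂ν, ν ({y}ᶜ) = 0 := by
    filter_upwards [hI0] with y hy
    have hy' : (fun y' => ENNReal.ofReal (dist y y' ^ p)) =ᵐ[ν] 0 :=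
      (lintegral_eq_zero_iff (measurable_cost_left p hp0' y)).1 hy
    have h0 : ν {y' | ¬ ENNReal.ofReal (dist y y' ^ p) = 0} = 0 := ae_iff.1 hy'
    refine measure_mono_null (fun y' hy'' => ?_) h0
    have hd : (0:ℝ) < dist y y' := dist_pos.2 fun hc => hy'' hc.symm
    exact (ENNReal.ofReal_pos.2 (Real.rpow_pos_of_pos hd p)).ne'
  haveI : (ae ν).NeBot := ae_neBot.2 (IsProbabilityMeasure.ne_zero ν)
  obtain ⟨y0, hy0⟩ := h2.exists
  have hν : ν = Measure.dirac y0 := by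
    ext s hs
    rw [Measure.dirac_apply' _ hs]
    by_cases hmem : y0 ∈ s
    · rw [Set.indicator_of_mem hmem, Pi.one_apply]
      have hsc : ν sᶜ = 0 := by
        refine measure_mono_null (fun z hz => ?_) hy0
        intro hzz
        rw [Set.mem_singleton_iff] at hzz
        exact hz (hzz ▸ hmem)
      have := measure_add_measure_compl (μ := ν) hs
      rw [hsc, add_zero, measure_univ] at this
      exact this
    · rw [Set.indicator_of_notMem hmem]
      refine measure_mono_null (fun z hz => ?_) hy0
      intro hzz
      rw [Set.mem_singleton_iff] at hzz
      exact hmem (hzz ▸ hz)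
  -- convergence of the sequence to y0
  have hlk : ∀ k, G k = ENNReal.ofReal (dist (a k) y0 ^ p) := by
    intro k
    show (∫⁻ y, ENNReal.ofReal (dist (a k) y ^ p) ∂ν) = _
    rw [hν]
    exact lintegral_dirac' _ (measurable_cost_left p hp0' (a k))
  simp only [hG] at h
  have h' : Tendsto (fun k => ENNReal.ofReal (dist (a k) y0 ^ p)) atTop (𝓝 0) := by
    refine h.congr fun k => ?_
    exact hlk k
  have hpow : Tendsto (fun k => dist (a k) y0 ^ p) atTop (𝓝 0) := by
    have h2 := (ENNReal.tendsto_toReal (a := 0) (by simp)).comp h'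
    have he : ((fun z : ℝ≥0∞ => z.toReal) ∘ fun k => ENNReal.ofReal (dist (a k) y0 ^ p))
        = fun k => dist (a k) y0 ^ p :=
      funext fun k => ENNReal.toReal_ofReal (Real.rpow_nonneg dist_nonneg p)
    rw [he] at h2
    simpa using h2
  have hdist : Tendsto (fun k => dist (a k) y0) atTop (𝓝 0) := by
    have hc : ContinuousAt (fun t : ℝ => t ^ p⁻¹) 0 :=
      Real.continuousAt_rpow_const 0 p⁻¹ (Or.inr (by positivity))
    have h3 := hc.tendsto.comp hpow
    have he : ((fun t : ℝ => t ^ p⁻¹) ∘ fun k => dist (a k) y0 ^ p)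
        = fun k => dist (a k) y0 :=
      funext fun k => by
        simp only [Function.comp_apply]
        rw [← Real.rpow_mul dist_nonneg, mul_inv_cancel₀ hp0, Real.rpow_one]
    rw [he] at h3
    simpa [Real.zero_rpow (inv_ne_zero hp0)] using h3
  exact ⟨y0, hν, tendsto_iff_dist_tendsto_zero.2 hdist⟩

end Aux

/-- If `π` is atomless, the set `𝒢_{π,p}(Ω × X)` of fibred measures of
the form `(Id, x)_♯ π` (fibres `δ_{x(ω)}`) with `x ∈ L^p(Ω, X; π)` is closed in
`P_{π,p}(Ω × X)` for the fibred `p`-Wasserstein topology: if `μₙ = (Id, xₙ)_♯ π`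
converges in `W_{π,p}` to `μ`, then `μ = (Id, x)_♯ π` for some `x ∈ L^p(Ω, X; π)`. -/
theorem stmt_7
    {Ω X : Type*} [MeasurableSpace Ω] [MetricSpace Ω] [BorelSpace Ω] [PolishSpace Ω]
    [MeasurableSpace X] [NormedAddCommGroup X] [BorelSpace X]
    [TopologicalSpace.SeparableSpace X]
    (p : ℝ) (hp : 1 ≤ p)
    (π : Measure Ω) [IsProbabilityMeasure π] [NullSingletonClass π]
    (xs : ℕ → Ω → X)
    (hxsmeas : ∀ n, Measurable (xs n))
    (hxsint : ∀ n, ∫⁻ ω, ENNReal.ofReal (‖xs n ω‖ ^ p) ∂π ≠ ∞)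
    (μ : Ω → Measure X) (hμmeas : Measurable μ)
    (hμp : ∀ ω, IsProbabilityMeasure (μ ω))
    (hμm : fibredMomentP p π μ ≠ ∞)
    (hconv : Tendsto (fun n => fibredWp p π (fun ω => Measure.dirac (xs n ω)) μ)
      atTop (𝓝 0)) :
    ∃ x : Ω → X, Measurable x ∧ (∫⁻ ω, ENNReal.ofReal (‖x ω‖ ^ p) ∂π ≠ ∞)
      ∧ ∀ᵐ ω ∂π, μ ω = Measure.dirac (x ω) := by
  have hp0 : p ≠ 0 := by positivity
  have hp0' : (0:ℝ) ≤ p := by linarith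
  have hppos : (0:ℝ) < p := by linarith
  haveI : SecondCountableTopology X := UniformSpace.secondCountable_of_separable X
  -- the fibrewise cost
  set G : ℕ → Ω → ℝ≥0∞ :=
    fun n ω => ∫⁻ y, ENNReal.ofReal (dist (xs n ω) y ^ p) ∂(μ ω) with hGdef
  -- measurability of the fibrewise cost
  have hG_meas : ∀ n, Measurable (G n) := by
    intro n
    let κ : ProbabilityTheory.Kernel Ω X := ⟨μ, hμmeas⟩
    haveI : ProbabilityTheory.IsMarkovKernel κ := ⟨hμp⟩
    have hf : Measurable fun z : Ω × X => ENNReal.ofReal (dist (xs n z.1) z.2 ^ p) := by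
      have h : (fun z : Ω × X => ENNReal.ofReal (dist (xs n z.1) z.2 ^ p))
          = fun z : Ω × X => (ENNReal.ofReal (dist (xs n z.1) z.2)) ^ p :=
        funext fun z => (ENNReal.ofReal_rpow_of_nonneg dist_nonneg hp0').symm
      rw [h]
      exact (ENNReal.continuous_rpow_const.measurable).comp
        (ENNReal.measurable_ofReal.comp
          (((hxsmeas n).comp measurable_fst).dist measurable_snd))
    exact Measurable.lintegral_kernel_prod_right' (κ := κ) hf
  -- convergence of the integrated cost
  have heq : ∀ n, fibredWp p π (fun ω => Measure.dirac (xs n ω)) μ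
      = (∫⁻ ω, G n ω ∂π) ^ (1 / p) := by
    intro n
    rw [fibredWp]
    congr 1
    refine lintegral_congr fun ω => ?_
    haveI := hμp ω
    exact Wp_dirac_pow p hp (xs n ω) (μ ω)
  have hF : Tendsto (fun n => ∫⁻ ω, G n ω ∂π) atTop (𝓝 0) := by
    have h2 : Tendsto (fun n => (fibredWp p π (fun ω => Measure.dirac (xs n ω)) μ) ^ p)
        atTop (𝓝 ((0:ℝ≥0∞) ^ p)) :=
      (ENNReal.continuous_rpow_const.tendsto 0).comp hconv
    rw [ENNReal.zero_rpow_of_pos hppos] at h2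
    refine h2.congr fun n => ?_
    rw [heq n, ← ENNReal.rpow_mul, one_div, inv_mul_cancel₀ hp0, ENNReal.rpow_one]
  -- extract a subsequence with summable costs
  have hex : ∀ k : ℕ, ∃ n, (∫⁻ ω, G n ω ∂π) < (2:ℝ≥0∞)⁻¹ ^ k := by
    intro k
    have hε : (0:ℝ≥0∞) < (2:ℝ≥0∞)⁻¹ ^ k :=
      pos_iff_ne_zero.2 (pow_ne_zero k (by norm_num))
    exact (hF.eventually (gt_mem_nhds hε)).exists
  choose ψ hψ using hex
  have hsum : ∫⁻ ω, ∑' k, G (ψ k) ω ∂π ≠ ⊤ := by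
    rw [lintegral_tsum fun k => (hG_meas (ψ k)).aemeasurable]
    have hle : ∑' k, ∫⁻ ω, G (ψ k) ω ∂π ≤ ∑' k : ℕ, (2:ℝ≥0∞)⁻¹ ^ k :=
      ENNReal.tsum_le_tsum fun k => (hψ k).le
    refine ne_top_of_le_ne_top ?_ hle
    rw [ENNReal.tsum_geometric, ENNReal.one_sub_inv_two]
    simp
  have hae0 : ∀ᵐ ω ∂π, ∑' k, G (ψ k) ω < ⊤ :=
    ae_lt_top (Measurable.ennreal_tsum fun k => hG_meas (ψ k)) hsum
  have htend : ∀ᵐ ω ∂π, Tendsto (fun k => G (ψ k) ω) atTop (𝓝 0) :=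
    hae0.mono fun ω h => ENNReal.tendsto_atTop_zero_of_tsum_ne_top h.ne
  have key : ∀ᵐ ω ∂π, ∃ y : X, μ ω = Measure.dirac y ∧
      Tendsto (fun k => xs (ψ k) ω) atTop (𝓝 y) := by
    filter_upwards [htend] with ω hω
    haveI := hμp ω
    exact dirac_of_cost_tendsto_zero p hp (μ ω) (fun k => xs (ψ k) ω) hω
  obtain ⟨x, hxmeas, hxtend⟩ := measurable_limit_of_tendsto_metrizable_ae
    (f := fun k ω => xs (ψ k) ω) (μ := π) (fun k => (hxsmeas (ψ k)).aemeasurable)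
    (key.mono fun ω hω => ⟨hω.choose, hω.choose_spec.2⟩)
  have hdirac : ∀ᵐ ω ∂π, μ ω = Measure.dirac (x ω) := by
    filter_upwards [key, hxtend] with ω hω hxω
    obtain ⟨y, hy1, hy2⟩ := hω
    rwa [tendsto_nhds_unique hy2 hxω] at hy1
  refine ⟨x, hxmeas, ?_, hdirac⟩
  have hnorm : Measurable fun z : X => ENNReal.ofReal (‖z‖ ^ p) := by
    have h : (fun z : X => ENNReal.ofReal (‖z‖ ^ p)) = fun z => (ENNReal.ofReal ‖z‖) ^ p :=
      funext fun z => (ENNReal.ofReal_rpow_of_nonneg (norm_nonneg z) hp0').symm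
    rw [h]
    exact (ENNReal.continuous_rpow_const.comp
      (ENNReal.continuous_ofReal.comp continuous_norm)).measurable
  have hmom : (∫⁻ ω, ENNReal.ofReal (‖x ω‖ ^ p) ∂π) = fibredMomentP p π μ := by
    rw [fibredMomentP]
    refine lintegral_congr_ae ?_
    filter_upwards [hdirac] with ω hω
    rw [hω, lintegral_dirac' _ hnorm]
  rw [hmom]
  exact hμm

end
end

section
/- Shifted Grönwall estimate: let β > 0 and f ∈ C⁰([−β, T], ℝ₊) satisfy f(t) ≤ α(t)(f(0) + ∫₀^t m(s) f(s−β) ds) for all t ∈ [0,T], where m ∈ L¹([0,T], ℝ₊) and α ∈ L^∞([0,T], ℝ₊). Then f(t) ≤ ‖α‖_∞ (f(0) + (sup_{s ∈ [−β,0]} f(s)) ‖m‖₁) exp(2‖α‖_∞‖m‖₁) for all t ∈ [0,T]. -/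
open MeasureTheory Set

lemma exp_neg_two_le_aux (x : ℝ) (hx0 : 0 ≤ x) (hx : x ≤ 1/2) :
    Real.exp (-(2*x)) ≤ 1 - x := by
  have h1 : 1 + 2*x ≤ Real.exp (2*x) := by linarith [Real.add_one_le_exp (2*x)]
  have h2 : Real.exp (-(2*x)) * Real.exp (2*x) = 1 := by
    rw [← Real.exp_add]; simp
  nlinarith [Real.exp_pos (-(2*x)), Real.exp_pos (2*x)]

/-- **shifted Grönwall estimate.** Let `β > 0` and let
`f ∈ C⁰([−β, T], ℝ₊)` satisfy `f(t) ≤ α(t) (f(0) + ∫₀ᵗ m(s) f(s−β) ds)` for all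
`t ∈ [0,T]`, where `m ∈ L¹([0,T], ℝ₊)` and `α ∈ L^∞([0,T], ℝ₊)` with `α ≤ Aα`. Then
`f(t) ≤ Aα (f(0) + (sup_{s ∈ [−β,0]} f(s)) ‖m‖₁) exp(2 Aα ‖m‖₁)` for all `t ∈ [0,T]`. -/
theorem stmt_10
    (T β : ℝ) (hβ : 0 < β) (hT : 0 ≤ T)
    (f : ℝ → ℝ) (hf : ContinuousOn f (Icc (-β) T))
    (hf0 : ∀ t ∈ Icc (-β) T, 0 ≤ f t)
    (m : ℝ → ℝ) (hm : IntegrableOn m (Icc 0 T)) (hm0 : ∀ t ∈ Icc (0 : ℝ) T, 0 ≤ m t)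
    (α : ℝ → ℝ) (Aα : ℝ) (hAα0 : 0 ≤ Aα)
    (hα : ∀ t ∈ Icc (0 : ℝ) T, 0 ≤ α t ∧ α t ≤ Aα)
    (hineq : ∀ t ∈ Icc (0 : ℝ) T,
      f t ≤ α t * (f 0 + ∫ s in Icc 0 t, m s * f (s - β))) :
    ∀ t ∈ Icc (0 : ℝ) T,
      f t ≤ Aα * (f 0 + sSup (f '' Icc (-β) 0) * ∫ s in Icc 0 T, m s)
        * Real.exp (2 * Aα * ∫ s in Icc 0 T, m s) := by
  have hβ0 : -β ≤ (0:ℝ) := by linarith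
  have h0mem : (0:ℝ) ∈ Icc (-β) T := ⟨hβ0, hT⟩
  have hf00 : 0 ≤ f 0 := hf0 0 h0mem
  set S := sSup (f '' Icc (-β) 0) with hSdef
  have hbdd : BddAbove (f '' Icc (-β) 0) :=
    (isCompact_Icc.image_of_continuousOn
      (hf.mono (Icc_subset_Icc le_rfl hT))).bddAbove
  have hSle : ∀ s ∈ Icc (-β) (0:ℝ), f s ≤ S := fun s hs => le_csSup hbdd ⟨s, hs, rfl⟩
  have hS0 : 0 ≤ S := le_trans hf00 (hSle 0 ⟨hβ0, le_rfl⟩)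
  have hsubset : ∀ s ∈ Icc (0:ℝ) T, s - β ∈ Icc (-β) T := by
    intro s hs; exact ⟨by linarith [hs.1], by linarith [hs.2]⟩
  have hgc : ContinuousOn (fun s => f (s - β)) (Icc (0:ℝ) T) :=
    hf.comp ((continuous_id.sub continuous_const).continuousOn) hsubset
  set g : ℝ → ℝ := fun s => m s * f (s - β) with hgdef
  have hg_int : IntegrableOn g (Icc 0 T) := hm.mul_continuousOn hgc isCompact_Icc
  have hg0 : ∀ s ∈ Icc (0:ℝ) T, 0 ≤ g s := fun s hs =>
    mul_nonneg (hm0 s hs) (hf0 _ (hsubset s hs))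
  set μf : ℝ → ℝ := fun u => ∫ s in Icc (0:ℝ) u, m s with hμdef
  set If : ℝ → ℝ := fun u => ∫ s in Icc (0:ℝ) u, g s with hIdef
  set φ : ℝ → ℝ := fun u => f 0 + If u with hφdef
  -- splitting lemma
  have hsplit : ∀ (h : ℝ → ℝ), IntegrableOn h (Icc 0 T) →
      ∀ a b : ℝ, 0 ≤ a → a ≤ b → b ≤ T →
      (∫ s in Icc (0:ℝ) b, h s) = (∫ s in Icc (0:ℝ) a, h s) + ∫ s in Ioc a b, h s := by
    intro h hint a b ha hab hbT
    rw [← Icc_union_Ioc_eq_Icc ha hab]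
    exact setIntegral_union ((Iic_disjoint_Ioc le_rfl).mono Icc_subset_Iic_self le_rfl)
      measurableSet_Ioc
      (hint.mono_set (Icc_subset_Icc le_rfl (le_trans hab hbT)))
      (hint.mono_set (Ioc_subset_Icc_self.trans (Icc_subset_Icc ha hbT)))
  have hI_split : ∀ a b : ℝ, 0 ≤ a → a ≤ b → b ≤ T →
      If b = If a + ∫ s in Ioc a b, g s := fun a b ha hab hbT =>
    hsplit g hg_int a b ha hab hbT
  have hμ_split : ∀ a b : ℝ, 0 ≤ a → a ≤ b → b ≤ T →
      μf b = μf a + ∫ s in Ioc a b, m s := fun a b ha hab hbT =>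
    hsplit m hm a b ha hab hbT
  have hIoc_nonneg : ∀ (h : ℝ → ℝ), (∀ s ∈ Icc (0:ℝ) T, 0 ≤ h s) →
      ∀ a b : ℝ, 0 ≤ a → b ≤ T → 0 ≤ ∫ s in Ioc a b, h s := by
    intro h h0 a b ha hbT
    apply setIntegral_nonneg measurableSet_Ioc
    intro s hs; exact h0 s ⟨le_trans ha hs.1.le, le_trans hs.2 hbT⟩
  have hI_mono : ∀ a b : ℝ, 0 ≤ a → a ≤ b → b ≤ T → If a ≤ If b := by
    intro a b ha hab hbT
    rw [hI_split a b ha hab hbT]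
    linarith [hIoc_nonneg g hg0 a b ha hbT]
  have hμ_mono : ∀ a b : ℝ, 0 ≤ a → a ≤ b → b ≤ T → μf a ≤ μf b := by
    intro a b ha hab hbT
    rw [hμ_split a b ha hab hbT]
    linarith [hIoc_nonneg m hm0 a b ha hbT]
  have hμ0 : μf 0 = 0 := by
    simp [hμdef, Icc_self]
  have hI0 : If 0 = 0 := by
    simp [hIdef, Icc_self]
  have hI_nonneg : ∀ u : ℝ, 0 ≤ u → u ≤ T → 0 ≤ If u := by
    intro u hu huT
    rw [← hI0]; exact hI_mono 0 u le_rfl hu huT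
  have hμ_nonneg : ∀ u : ℝ, 0 ≤ u → u ≤ T → 0 ≤ μf u := by
    intro u hu huT
    rw [← hμ0]; exact hμ_mono 0 u le_rfl hu huT
  have hφ_nonneg : ∀ u : ℝ, 0 ≤ u → u ≤ T → 0 ≤ φ u := fun u hu huT =>
    add_nonneg hf00 (hI_nonneg u hu huT)
  have hφ_mono : ∀ a b : ℝ, 0 ≤ a → a ≤ b → b ≤ T → φ a ≤ φ b := by
    intro a b ha hab hbT
    have := hI_mono a b ha hab hbT
    simp only [hφdef]; linarith
  -- f u ≤ Aα * φ u on [0,T]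
  have hfφ : ∀ u : ℝ, 0 ≤ u → u ≤ T → f u ≤ Aα * φ u := by
    intro u hu huT
    have h1 : f u ≤ α u * φ u := hineq u ⟨hu, huT⟩
    have h2 : α u * φ u ≤ Aα * φ u :=
      mul_le_mul_of_nonneg_right (hα u ⟨hu, huT⟩).2 (hφ_nonneg u hu huT)
    linarith
  set Ψ : ℝ → ℝ := fun u => φ u + S * (μf T - μf u) with hΨdef
  have hφΨ : ∀ u : ℝ, 0 ≤ u → u ≤ T → φ u ≤ Ψ u := by
    intro u hu huT
    have h1 : μf u ≤ μf T := hμ_mono u T hu huT le_rfl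
    have h2 : 0 ≤ S * (μf T - μf u) := mul_nonneg hS0 (by linarith)
    simp only [hΨdef]; linarith
  have hΨ_nonneg : ∀ u : ℝ, 0 ≤ u → u ≤ T → 0 ≤ Ψ u := fun u hu huT =>
    le_trans (hφ_nonneg u hu huT) (hφΨ u hu huT)
  -- key step estimate
  have hstep : ∀ a b : ℝ, 0 ≤ a → a ≤ b → b ≤ T →
      Aα * (μf b - μf a) ≤ 1/2 →
      Ψ b ≤ Ψ a * Real.exp (2 * Aα * (μf b - μf a)) := by
    intro a b ha hab hbT hsmall
    set Δ := μf b - μf a with hΔdef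
    have hΔ0 : 0 ≤ Δ := by
      have := hμ_mono a b ha hab hbT; simp only [hΔdef]; linarith
    have hΔeq : Δ = ∫ s in Ioc a b, m s := by
      rw [hΔdef, hμ_split a b ha hab hbT]; ring
    -- pointwise bound on g over Ioc a b
    have hptwise : ∀ s ∈ Ioc a b, g s ≤ m s * (S + Aα * φ b) := by
      intro s hs
      have hs0 : 0 ≤ s := le_trans ha hs.1.le
      have hsT : s ≤ T := le_trans hs.2 hbT
      have hms : 0 ≤ m s := hm0 s ⟨hs0, hsT⟩
      have hfs : f (s - β) ≤ S + Aα * φ b := by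
        by_cases hcase : s ≤ β
        · have h1 : f (s - β) ≤ S := hSle (s - β) ⟨by linarith, by linarith⟩
          have h2 : 0 ≤ Aα * φ b := mul_nonneg hAα0 (hφ_nonneg b (le_trans ha hab) hbT)
          linarith
        · push_neg at hcase
          have hmem : s - β ∈ Icc (0:ℝ) T := ⟨by linarith, by linarith⟩
          have h1 : f (s - β) ≤ α (s - β) * φ (s - β) := hineq (s - β) hmem
          have h2 : α (s - β) * φ (s - β) ≤ Aα * φ (s - β) :=
            mul_le_mul_of_nonneg_right (hα _ hmem).2 (hφ_nonneg _ hmem.1 hmem.2)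
          have h3 : φ (s - β) ≤ φ b := hφ_mono (s - β) b hmem.1 (by linarith [hs.2]) hbT
          have h4 : Aα * φ (s - β) ≤ Aα * φ b := mul_le_mul_of_nonneg_left h3 hAα0
          have h5 : 0 ≤ S := hS0
          linarith
      calc g s = m s * f (s - β) := rfl
        _ ≤ m s * (S + Aα * φ b) := mul_le_mul_of_nonneg_left hfs hms
    have hIb : If b ≤ If a + Δ * (S + Aα * φ b) := by
      rw [hI_split a b ha hab hbT]
      have hgsub : IntegrableOn g (Ioc a b) :=
        hg_int.mono_set (Ioc_subset_Icc_self.trans (Icc_subset_Icc ha hbT))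
      have hmsub : IntegrableOn (fun s => m s * (S + Aα * φ b)) (Ioc a b) :=
        (hm.mono_set (Ioc_subset_Icc_self.trans (Icc_subset_Icc ha hbT))).mul_const _
      have := setIntegral_mono_on hgsub hmsub measurableSet_Ioc hptwise
      rw [integral_mul_const] at this
      rw [hΔeq]
      linarith
    -- Ψ b ≤ Ψ a + Aα * Δ * Ψ b
    have hkey : Ψ b ≤ Ψ a + Aα * Δ * Ψ b := by
      have hφbΨ : φ b ≤ Ψ b := hφΨ b (le_trans ha hab) hbT
      have hAΔ : 0 ≤ Aα * Δ := mul_nonneg hAα0 hΔ0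
      have h1 : Aα * Δ * φ b ≤ Aα * Δ * Ψ b := mul_le_mul_of_nonneg_left hφbΨ hAΔ
      have hexp : Ψ b = f 0 + If b + S * (μf T - μf b) := rfl
      have hexp' : Ψ a = f 0 + If a + S * (μf T - μf a) := rfl
      have hμrel : μf T - μf a = Δ + (μf T - μf b) := by simp only [hΔdef]; ring
      nlinarith [hIb]
    set x := Aα * Δ with hxdef
    have hx0 : 0 ≤ x := mul_nonneg hAα0 hΔ0
    have hexpineq := exp_neg_two_le_aux x hx0 hsmall
    have hΨb0 : 0 ≤ Ψ b := hΨ_nonneg b (le_trans ha hab) hbT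
    -- Ψ b * exp(-(2x)) ≤ Ψ a
    have h6 : Ψ b * Real.exp (-(2*x)) ≤ Ψ a := by
      have h7 : Ψ b * Real.exp (-(2*x)) ≤ Ψ b * (1 - x) :=
        mul_le_mul_of_nonneg_left hexpineq hΨb0
      nlinarith [hkey]
    have h8 : Ψ b * Real.exp (-(2*x)) * Real.exp (2*x) ≤ Ψ a * Real.exp (2*x) :=
      mul_le_mul_of_nonneg_right h6 (Real.exp_nonneg _)
    rw [mul_assoc, ← Real.exp_add] at h8
    simp only [neg_add_cancel, Real.exp_zero, mul_one] at h8
    have : (2:ℝ) * Aα * Δ = 2 * x := by rw [hxdef]; ring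
    rw [this]
    exact h8
  -- continuity of μf
  have hμcont : ContinuousOn μf (Icc (0:ℝ) T) := by
    simpa using intervalIntegral.continuousOn_primitive_Icc hm
  have hΨ0 : Ψ 0 = f 0 + S * μf T := by
    simp only [hΨdef, hφdef, hI0, hμ0]
    ring
  set C := f 0 + S * μf T with hCdef
  -- main induction
  have hmain : ∀ n : ℕ, ∀ u : ℝ, 0 ≤ u → u ≤ T → Aα * μf u ≤ (n+1)/2 →
      Ψ u ≤ C * Real.exp (2 * Aα * μf u) := by
    intro n
    induction n with
    | zero =>
      intro u hu huT hle
      have h1 : Aα * (μf u - μf 0) ≤ 1/2 := by rw [hμ0]; simpa using hle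
      have := hstep 0 u le_rfl hu huT h1
      rw [hΨ0, hμ0] at this
      simpa using this
    | succ n ih =>
      intro u hu huT hle
      by_cases hcase : Aα * μf u ≤ (n+1)/2
      · exact ih u hu huT hcase
      · push_neg at hcase
        have hμu0 : 0 ≤ μf u := hμ_nonneg u hu huT
        have hn0 : (0:ℝ) ≤ (n:ℝ) := Nat.cast_nonneg n
        have h12 : (1:ℝ)/2 ≤ Aα * μf u := by linarith
        have hApos : 0 < Aα := by
          rcases hAα0.lt_or_eq with h | h
          · exact h
          · exfalso; rw [← h] at h12; nlinarith
        have htarget : μf u - 1/(2*Aα) ∈ Icc (μf 0) (μf u) := by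
          constructor
          · rw [hμ0]
            have hd : 1/(2*Aα) ≤ μf u := by
              rw [div_le_iff₀ (by positivity)]
              nlinarith
            linarith
          · have : 0 < 1/(2*Aα) := by positivity
            linarith
        obtain ⟨c, hc, hμc⟩ := intermediate_value_Icc hu
          (hμcont.mono (Icc_subset_Icc le_rfl huT)) htarget
        have hc0 : 0 ≤ c := hc.1
        have hcT : c ≤ T := le_trans hc.2 huT
        have hAne : Aα ≠ 0 := ne_of_gt hApos
        push_cast at hle
        have hid : Aα * (μf u - 1/(2*Aα)) = Aα * μf u - 1/2 := by
          field_simp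
        have h1 : Aα * μf c ≤ ((n:ℝ)+1)/2 := by
          rw [hμc, hid]; linarith
        have h2 : Aα * (μf u - μf c) ≤ 1/2 := by
          rw [hμc]
          have he : Aα * (μf u - (μf u - 1/(2*Aα))) = 1/2 := by
            field_simp <;> ring
          linarith
        calc Ψ u ≤ Ψ c * Real.exp (2 * Aα * (μf u - μf c)) :=
              hstep c u hc0 hc.2 huT h2
          _ ≤ C * Real.exp (2 * Aα * μf c) * Real.exp (2 * Aα * (μf u - μf c)) :=
              mul_le_mul_of_nonneg_right (ih c hc0 hcT h1) (Real.exp_nonneg _)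
          _ = C * Real.exp (2 * Aα * μf u) := by
              rw [mul_assoc, ← Real.exp_add]; ring_nf
  -- conclusion
  intro t ht
  obtain ⟨n, hn⟩ := exists_nat_ge (2 * Aα * μf t)
  have hle : Aα * μf t ≤ ((n:ℝ)+1)/2 := by linarith
  have hΨt : Ψ t ≤ C * Real.exp (2 * Aα * μf t) := hmain n t ht.1 ht.2 hle
  have hC0 : 0 ≤ C := by
    have : 0 ≤ μf T := hμ_nonneg T hT le_rfl
    have : 0 ≤ S * μf T := mul_nonneg hS0 ‹0 ≤ μf T›
    simp only [hCdef]; linarith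
  have hexpmono : Real.exp (2 * Aα * μf t) ≤ Real.exp (2 * Aα * μf T) := by
    apply Real.exp_le_exp.mpr
    have := hμ_mono t T ht.1 ht.2 le_rfl
    nlinarith
  have hfinal : f t ≤ Aα * C * Real.exp (2 * Aα * μf T) := by
    have h1 : f t ≤ Aα * φ t := hfφ t ht.1 ht.2
    have h2 : φ t ≤ Ψ t := hφΨ t ht.1 ht.2
    have h3 : Ψ t ≤ C * Real.exp (2 * Aα * μf T) := by
      calc Ψ t ≤ C * Real.exp (2 * Aα * μf t) := hΨt
        _ ≤ C * Real.exp (2 * Aα * μf T) :=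
          mul_le_mul_of_nonneg_left hexpmono hC0
    calc f t ≤ Aα * φ t := h1
      _ ≤ Aα * Ψ t := mul_le_mul_of_nonneg_left h2 hAα0
      _ ≤ Aα * (C * Real.exp (2 * Aα * μf T)) :=
          mul_le_mul_of_nonneg_left h3 hAα0
      _ = Aα * C * Real.exp (2 * Aα * μf T) := by ring
  exact hfinal
end

section
/- Equi-integrability propagation: under the sublinearity bound |v(t,ω,x)| ≤ m(t)(1+|x|), there exists C_T = max{1,‖m‖₁} exp(‖m‖₁) such that for π-a.e. ω, every R > 0, and all t ∈ [τ,T], ∫_{{|x| ≥ R}} |x|^p dμ_ω(t)(x) ≤ C_T^p ∫_{{|x| ≥ R/C_T − 1}} (1+|x|)^p dμ^τ_ω(x). -/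
open MeasureTheory ENNReal Filter Topology

noncomputable section

/-- The set of characteristic pairs `(x, σ)` of the velocity field `v` on `[τ, T]`:
`σ` is a continuous curve with `σ(τ) = x` solving `σ(t) = x + ∫_τ^t v(s, σ(s)) ds`. -/
def CharSet {E : Type*} [NormedAddCommGroup E] [NormedSpace ℝ E]
    (τ T : ℝ) (v : ℝ → E → E) : Set (E × (ℝ → E)) :=
  {q | Continuous q.2 ∧ q.2 τ = q.1 ∧
    ∀ t ∈ Set.Icc τ T, q.2 t = q.1 + ∫ s in τ..t, v s (q.2 s)}



/-- Integral-form Grönwall with `ε`-slack, endpoint version. -/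
lemma gronwall_eps {a b : ℝ} (hab : a ≤ b) {m u : ℝ → ℝ} {A : ℝ} (hA : 0 < A)
    (hm : IntegrableOn m (Set.Icc a b)) (hm0 : ∀ s, 0 ≤ m s)
    (hmu : IntegrableOn (fun s => m s * u s) (Set.Icc a b))
    (hu0 : ∀ s, 0 ≤ u s)
    (hu : ∀ t ∈ Set.Icc a b, u t ≤ A + ∫ s in a..t, m s * u s)
    {ε : ℝ} (hε : 0 < ε) :
    u b ≤ A * Real.exp ((1 + ε) * ∫ s in a..b, m s) := by
  have hmI : IntervalIntegrable m volume a b := by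
    rw [intervalIntegrable_iff_integrableOn_Icc_of_le hab]; exact hm
  have hmuI : IntervalIntegrable (fun s => m s * u s) volume a b := by
    rw [intervalIntegrable_iff_integrableOn_Icc_of_le hab]; exact hmu
  have hsub : ∀ {c d : ℝ}, a ≤ c → d ≤ b → c ≤ d →
      IntervalIntegrable (fun s => m s * u s) volume c d := fun hc hd hcd =>
    hmuI.mono_set (by rw [Set.uIcc_of_le hcd, Set.uIcc_of_le hab]; exact Set.Icc_subset_Icc hc hd)
  have hsubm : ∀ {c d : ℝ}, a ≤ c → d ≤ b → c ≤ d →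
      IntervalIntegrable m volume c d := fun hc hd hcd =>
    hmI.mono_set (by rw [Set.uIcc_of_le hcd, Set.uIcc_of_le hab]; exact Set.Icc_subset_Icc hc hd)
  set F : ℝ → ℝ := fun t => A + ∫ s in a..t, m s * u s with hF
  set M : ℝ → ℝ := fun t => ∫ s in a..t, m s with hM
  have hFcont : ContinuousOn F (Set.Icc a b) := by
    have := intervalIntegral.continuousOn_primitive_interval
      (f := fun s => m s * u s) (a := a) (b := b) (μ := volume)
      (by rw [Set.uIcc_of_le hab]; exact hmu)
    rw [Set.uIcc_of_le hab] at this
    exact continuousOn_const.add this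
  have hMcont : ContinuousOn M (Set.Icc a b) := by
    have := intervalIntegral.continuousOn_primitive_interval
      (f := m) (a := a) (b := b) (μ := volume)
      (by rw [Set.uIcc_of_le hab]; exact hm)
    rwa [Set.uIcc_of_le hab] at this
  have hFmono : ∀ {c d : ℝ}, a ≤ c → d ≤ b → c ≤ d → F c ≤ F d := by
    intro c d hc hd hcd
    have hadd := intervalIntegral.integral_add_adjacent_intervals
      (hsub le_rfl (hcd.trans hd) hc) (hsub hc hd hcd)
    have hnn : 0 ≤ ∫ s in c..d, m s * u s :=
      intervalIntegral.integral_nonneg hcd (fun s _ => mul_nonneg (hm0 s) (hu0 s))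
    simp only [hF]
    rw [← hadd]; linarith
  have hAF : ∀ t, a ≤ t → A ≤ F t := by
    intro t hat
    have : 0 ≤ ∫ s in a..t, m s * u s := by
      by_cases h : t ≤ b
      · exact intervalIntegral.integral_nonneg hat (fun s _ => mul_nonneg (hm0 s) (hu0 s))
      · exact intervalIntegral.integral_nonneg hat (fun s _ => mul_nonneg (hm0 s) (hu0 s))
    simp only [hF]; linarith
  -- the set where the conclusion holds
  set S : Set ℝ := Set.Icc a b ∩ {t | F t - A * Real.exp ((1 + ε) * M t) ≤ 0} with hS
  have haS : a ∈ S := by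
    constructor
    · exact ⟨le_rfl, hab⟩
    · simp only [Set.mem_setOf_eq, hF, hM, intervalIntegral.integral_same]
      simp
  have hScl : IsClosed S := by
    apply ContinuousOn.preimage_isClosed_of_isClosed
      (f := fun t => F t - A * Real.exp ((1 + ε) * M t)) (t := Set.Iic 0)
    · exact hFcont.sub (continuousOn_const.mul ((continuousOn_const.mul hMcont).rexp))
    · exact isClosed_Icc
    · exact isClosed_Iic
  have hScomp : IsCompact S := isCompact_Icc.of_isClosed_subset hScl Set.inter_subset_left
  have hcS : sSup S ∈ S := hScomp.sSup_mem ⟨a, haS⟩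
  set c := sSup S with hc
  have hcb : c = b := by
    by_contra hne
    have hclt : c < b := lt_of_le_of_ne hcS.1.2 hne
    have hac : a ≤ c := hcS.1.1
    -- pick t' ∈ (c, b] with M t' < M c + ε/(1+ε)
    have hδ : 0 < ε / (1 + ε) := div_pos hε (by linarith)
    have hev : ∀ᶠ t in 𝓝[Set.Icc a b] c, M t < M c + ε / (1 + ε) := by
      have := (hMcont.continuousWithinAt ⟨hac, hcS.1.2⟩)
      exact this.eventually_lt continuousWithinAt_const (by linarith)
    have hev' : ∀ᶠ t in 𝓝[Set.Ioc c b] c, M t < M c + ε / (1 + ε) :=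
      hev.filter_mono (nhdsWithin_mono _
        (Set.Ioc_subset_Icc_self.trans (Set.Icc_subset_Icc hac le_rfl)))
    have : ∃ t', t' ∈ Set.Ioc c b ∧ M t' < M c + ε / (1 + ε) := by
      have hne : (𝓝[Set.Ioc c b] c).NeBot := left_nhdsWithin_Ioc_neBot hclt
      exact (eventually_mem_nhdsWithin.and hev').exists
    obtain ⟨t', ht'mem, ht'M⟩ := this
    have hct' : c < t' := ht'mem.1
    have ht'b : t' ≤ b := ht'mem.2
    have hat' : a ≤ t' := hac.trans hct'.le
    set x := M t' - M c with hx
    have hxM : x = ∫ s in c..t', m s := by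
      have := intervalIntegral.integral_add_adjacent_intervals
        (hsubm le_rfl (hct'.le.trans ht'b) hac) (hsubm hac ht'b hct'.le)
      simp only [hx, hM]; rw [← this]; ring
    have hx0 : 0 ≤ x := by
      rw [hxM]; exact intervalIntegral.integral_nonneg hct'.le (fun s _ => hm0 s)
    have hxδ : x ≤ ε / (1 + ε) := by simp only [hx]; linarith
    have hxε : (1 + ε) * x ≤ ε := by
      have := (le_div_iff₀ (by linarith : (0:ℝ) < 1 + ε)).1 hxδ
      nlinarith
    have hx1 : x < 1 := by
      have : ε / (1 + ε) < 1 := (div_lt_one (by linarith)).2 (by linarith)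
      linarith
    -- step estimate
    have hstep : F t' ≤ F c + x * F t' := by
      have hadd := intervalIntegral.integral_add_adjacent_intervals
        (hsub le_rfl (hct'.le.trans ht'b) hac) (hsub hac ht'b hct'.le)
      have hmono : ∫ s in c..t', m s * u s ≤ ∫ s in c..t', m s * F t' := by
        apply intervalIntegral.integral_mono_on hct'.le (hsub hac ht'b hct'.le)
          ((hsubm hac ht'b hct'.le).mul_const _)
        intro s hs
        have hsF : u s ≤ F s := hu s ⟨hac.trans hs.1, hs.2.trans ht'b⟩
        have : F s ≤ F t' := hFmono (hac.trans hs.1) ht'b hs.2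
        exact mul_le_mul_of_nonneg_left (by linarith) (hm0 s)
      have hconst : ∫ s in c..t', m s * F t' = x * F t' := by
        rw [intervalIntegral.integral_mul_const, ← hxM]
      have hFadd : F t' = F c + ∫ s in c..t', m s * u s := by
        simp only [hF]; rw [← hadd]; ring
      rw [hconst] at hmono
      linarith
    have hFpos : 0 < F t' := lt_of_lt_of_le hA (hAF t' hat')
    have hFc0 : 0 < F c := lt_of_lt_of_le hA (hAF c hac)
    have h1x : F t' * (1 - x) ≤ F c := by nlinarith
    have hkey : F t' ≤ F c * (1 + (1 + ε) * x) := by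
      nlinarith [mul_le_mul_of_nonneg_right h1x (by positivity : (0:ℝ) ≤ 1 + (1 + ε) * x),
        mul_nonneg (mul_nonneg hFpos.le hx0) (sub_nonneg.2 hxε)]
    have hexp : (1 : ℝ) + (1 + ε) * x ≤ Real.exp ((1 + ε) * x) := by
      have := Real.add_one_le_exp ((1 + ε) * x); linarith
    have hFt' : F t' ≤ A * Real.exp ((1 + ε) * M t') := by
      have hc2 : F c ≤ A * Real.exp ((1 + ε) * M c) := by
        have := hcS.2; simp only [Set.mem_setOf_eq] at this; linarith
      calc F t' ≤ F c * (1 + (1 + ε) * x) := hkey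
        _ ≤ F c * Real.exp ((1 + ε) * x) :=
            mul_le_mul_of_nonneg_left hexp hFc0.le
        _ ≤ (A * Real.exp ((1 + ε) * M c)) * Real.exp ((1 + ε) * x) :=
            mul_le_mul_of_nonneg_right hc2 (Real.exp_pos _).le
        _ = A * Real.exp ((1 + ε) * M t') := by
            rw [mul_assoc, ← Real.exp_add, hx]; ring_nf
    have ht'S : t' ∈ S := ⟨⟨hat', ht'b⟩, by simp only [Set.mem_setOf_eq]; linarith⟩
    have := le_csSup hScomp.bddAbove ht'S
    exact absurd this (not_le.2 hct')
  have hb : F b ≤ A * Real.exp ((1 + ε) * M b) := by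
    have := hcS.2; rw [hcb] at this; simp only [Set.mem_setOf_eq] at this; linarith
  exact (hu b ⟨hab, le_rfl⟩).trans hb

/-- Integral-form Grönwall. -/
lemma gronwall_int {a b : ℝ} (hab : a ≤ b) {m u : ℝ → ℝ} {A : ℝ} (hA : 0 < A)
    (hm : IntegrableOn m (Set.Icc a b)) (hm0 : ∀ s, 0 ≤ m s)
    (hmu : IntegrableOn (fun s => m s * u s) (Set.Icc a b))
    (hu0 : ∀ s, 0 ≤ u s)
    (hu : ∀ t ∈ Set.Icc a b, u t ≤ A + ∫ s in a..t, m s * u s) :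
    u b ≤ A * Real.exp (∫ s in a..b, m s) := by
  have key : ∀ ε : ℝ, 0 < ε → u b ≤ A * Real.exp ((1 + ε) * ∫ s in a..b, m s) :=
    fun ε hε => gronwall_eps hab hA hm hm0 hmu hu0 hu hε
  have hcont : Tendsto (fun ε : ℝ => A * Real.exp ((1 + ε) * ∫ s in a..b, m s))
      (𝓝[>] (0:ℝ)) (𝓝 (A * Real.exp ((1 + 0) * ∫ s in a..b, m s))) := by
    apply Tendsto.mono_left _ nhdsWithin_le_nhds
    exact (Continuous.tendsto (by continuity) 0)
  have := ge_of_tendsto hcont (eventually_nhdsWithin_of_forall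
    (fun ε hε => key ε hε))
  simpa using this

section CharBound

variable {E : Type*} [NormedAddCommGroup E] [NormedSpace ℝ E]


lemma char_bound {τ T : ℝ} (hτ : 0 ≤ τ) {m : ℝ → ℝ}
    (hm : IntegrableOn m (Set.Icc 0 T)) (hm0 : ∀ s, 0 ≤ m s)
    {w : ℝ → E → E} (hv : ∀ s x, ‖w s x‖ ≤ m s * (1 + ‖x‖))
    {q : E × (ℝ → E)} (hq : q ∈ CharSet τ T w)
    {t : ℝ} (ht : t ∈ Set.Icc τ T) :
    ‖q.2 t‖ ≤ (max 1 (∫ s in Set.Icc τ T, m s)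
        * Real.exp (∫ s in Set.Icc τ T, m s)) * (1 + ‖q.1‖) := by
  obtain ⟨hσc, hστ, hσeq⟩ := hq
  set σ := q.2
  set x := q.1
  set K := ∫ s in Set.Icc τ T, m s with hK
  set u : ℝ → ℝ := fun s => 1 + ‖σ s‖ with hu
  set A : ℝ := 1 + ‖x‖ with hA
  have hA0 : 0 < A := by positivity
  have hτt : τ ≤ t := ht.1
  have htT : t ≤ T := ht.2
  have hmT : IntegrableOn m (Set.Icc τ T) := hm.mono_set (Set.Icc_subset_Icc hτ le_rfl)
  have hmt : IntegrableOn m (Set.Icc τ t) := hmT.mono_set (Set.Icc_subset_Icc le_rfl htT)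
  have hucont : Continuous u := continuous_const.add hσc.norm
  have hmut : IntegrableOn (fun s => m s * u s) (Set.Icc τ t) := by
    have : IntervalIntegrable (fun s => m s * u s) volume τ t := by
      apply IntervalIntegrable.mul_continuousOn _ hucont.continuousOn
      rw [intervalIntegrable_iff_integrableOn_Icc_of_le hτt]; exact hmt
    rwa [intervalIntegrable_iff_integrableOn_Icc_of_le hτt] at this
  have hu0 : ∀ s, 0 ≤ u s := fun s => by positivity
  have hK0 : 0 ≤ K := setIntegral_nonneg measurableSet_Icc fun s _ => hm0 s
  have hmono : ∀ r ∈ Set.Icc τ t, u r ≤ A + ∫ s in τ..r, m s * u s := by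
    intro r hr
    have hmuIr : IntervalIntegrable (fun s => m s * u s) volume τ r := by
      rw [intervalIntegrable_iff_integrableOn_Icc_of_le hr.1]
      exact hmut.mono_set (Set.Icc_subset_Icc le_rfl hr.2)
    have hrT : r ∈ Set.Icc τ T := ⟨hr.1, hr.2.trans htT⟩
    by_cases hInt : IntervalIntegrable (fun s => w s (σ s)) volume τ r
    · have h1 : ‖σ r‖ ≤ ‖x‖ + ∫ s in τ..r, ‖w s (σ s)‖ := by
        rw [hσeq r hrT]
        refine (norm_add_le _ _).trans (add_le_add le_rfl ?_)
        exact intervalIntegral.norm_integral_le_integral_norm hr.1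
      have h2 : (∫ s in τ..r, ‖w s (σ s)‖) ≤ ∫ s in τ..r, m s * u s := by
        apply intervalIntegral.integral_mono_on hr.1 hInt.norm hmuIr
        intro s _
        exact hv s (σ s)
      simp only [hu, hA]; linarith
    · have : σ r = x := by
        rw [hσeq r hrT, intervalIntegral.integral_undef hInt, add_zero]
      have hnn : 0 ≤ ∫ s in τ..r, m s * u s :=
        intervalIntegral.integral_nonneg hr.1 fun s _ => mul_nonneg (hm0 s) (hu0 s)
      simp only [hu, hA, this]; linarith
  have hgron : u t ≤ A * Real.exp (∫ s in τ..t, m s) :=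
    gronwall_int hτt hA0 hmt hm0 hmut hu0 hmono
  have hMK : (∫ s in τ..t, m s) ≤ K := by
    rw [intervalIntegral.integral_of_le hτt]
    apply setIntegral_mono_set hmT
    · exact Filter.Eventually.of_forall fun s => hm0 s
    · exact Filter.Eventually.of_forall fun s hs => ⟨le_of_lt hs.1, hs.2.trans htT⟩
  have hexp : Real.exp (∫ s in τ..t, m s) ≤ Real.exp K := Real.exp_le_exp.2 hMK
  have h1 : u t ≤ A * Real.exp K := hgron.trans (mul_le_mul_of_nonneg_left hexp hA0.le)
  have hmax : (1:ℝ) ≤ max 1 K := le_max_left _ _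
  have hexpK : 0 < Real.exp K := Real.exp_pos _
  have : A * Real.exp K ≤ max 1 K * Real.exp K * A := by
    nlinarith [mul_nonneg (mul_nonneg (sub_nonneg.2 hmax) hexpK.le) hA0.le]
  have hut : ‖σ t‖ ≤ u t := by
    have h : u t = 1 + ‖σ t‖ := rfl
    rw [h]; linarith
  calc ‖σ t‖ ≤ u t := hut
    _ ≤ A * Real.exp K := h1
    _ ≤ max 1 K * Real.exp K * A := this

end CharBound

/-- **equi-integrability propagation.** Under the sublinearity bound
`|v(t,ω,x)| ≤ m(t)(1+|x|)`, with `C_T = max{1, ‖m‖₁} exp(‖m‖₁)`, for `π`-a.e. `ω`,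
every `R > 0` and all `t ∈ [τ,T]`,
`∫_{{|x| ≥ R}} |x|^p dμ_ω(t) ≤ C_T^p ∫_{{|x| ≥ R/C_T − 1}} (1+|x|)^p dμ^τ_ω`. -/
theorem stmt_13
    {Ω : Type*} [MeasurableSpace Ω] {d : ℕ}
    (p τ T : ℝ) (hp : 1 ≤ p) (hτ : 0 ≤ τ) (hτT : τ ≤ T)
    (π : Measure Ω) [IsProbabilityMeasure π]
    (v : ℝ → Ω → EuclideanSpace ℝ (Fin d) → EuclideanSpace ℝ (Fin d))
    (m : ℝ → ℝ) (hm : IntegrableOn m (Set.Icc 0 T)) (hm0 : ∀ t, 0 ≤ m t)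
    (hv : ∀ t ω x, ‖v t ω x‖ ≤ m t * (1 + ‖x‖))
    (η : Ω → Measure (EuclideanSpace ℝ (Fin d) × (ℝ → EuclideanSpace ℝ (Fin d))))
    (μτ : Ω → Measure (EuclideanSpace ℝ (Fin d)))
    (μ : ℝ → Ω → Measure (EuclideanSpace ℝ (Fin d)))
    (hμτm : fibredMomentP p π μτ ≠ ∞)
    (hη : ∀ᵐ ω ∂π, IsProbabilityMeasure (η ω)
      ∧ (η ω) (CharSet τ T (fun s => v s ω))ᶜ = 0
      ∧ (η ω).map Prod.fst = μτ ω
      ∧ ∀ t ∈ Set.Icc τ T, (η ω).map (fun q => q.2 t) = μ t ω) :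
    ∀ᵐ ω ∂π, ∀ R : ℝ, 0 < R → ∀ t ∈ Set.Icc τ T,
      (∫⁻ x in {x : EuclideanSpace ℝ (Fin d) | R ≤ ‖x‖},
          ENNReal.ofReal (‖x‖ ^ p) ∂(μ t ω))
        ≤ ENNReal.ofReal
              ((max 1 (∫ s in Set.Icc τ T, m s)
                  * Real.exp (∫ s in Set.Icc τ T, m s)) ^ p)
          * ∫⁻ x in {x : EuclideanSpace ℝ (Fin d) |
                R / (max 1 (∫ s in Set.Icc τ T, m s)
                      * Real.exp (∫ s in Set.Icc τ T, m s)) - 1 ≤ ‖x‖},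
              ENNReal.ofReal ((1 + ‖x‖) ^ p) ∂(μτ ω) := by
  classical
  set K := ∫ s in Set.Icc τ T, m s with hK
  set C := max 1 K * Real.exp K with hC
  have hK0 : 0 ≤ K := setIntegral_nonneg measurableSet_Icc fun s _ => hm0 s
  have hC1 : (1:ℝ) ≤ C := by
    have h1 : (1:ℝ) ≤ max 1 K := le_max_left _ _
    have h2 : (1:ℝ) ≤ Real.exp K := Real.one_le_exp hK0
    nlinarith
  have hC0 : (0:ℝ) < C := by linarith
  have hp0 : (0:ℝ) ≤ p := by linarith
  filter_upwards [hη] with ω hω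
  obtain ⟨hprob, hchar, hfst, hmap⟩ := hω
  intro R hR t ht
  have hchar' : ∀ᵐ q ∂(η ω), q ∈ CharSet τ T (fun s => v s ω) := by
    rw [MeasureTheory.ae_iff]
    exact hchar
  rw [← hmap t ht, ← hfst]
  have hmeas_ev : Measurable
      (fun q : EuclideanSpace ℝ (Fin d) × (ℝ → EuclideanSpace ℝ (Fin d)) => q.2 t) :=
    (measurable_pi_apply t).comp measurable_snd
  have hmeasS : MeasurableSet {x : EuclideanSpace ℝ (Fin d) | R ≤ ‖x‖} :=
    (isClosed_le continuous_const continuous_norm).measurableSet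
  have hmeasS' : MeasurableSet {x : EuclideanSpace ℝ (Fin d) | R / C - 1 ≤ ‖x‖} :=
    (isClosed_le continuous_const continuous_norm).measurableSet
  have hf1 : Measurable (fun x : EuclideanSpace ℝ (Fin d) => ENNReal.ofReal (‖x‖ ^ p)) :=
    (ENNReal.continuous_ofReal.comp
      ((Real.continuous_rpow_const hp0).comp continuous_norm)).measurable
  have hf2 : Measurable (fun x : EuclideanSpace ℝ (Fin d) => ENNReal.ofReal ((1 + ‖x‖) ^ p)) :=
    (ENNReal.continuous_ofReal.comp
      ((Real.continuous_rpow_const hp0).comp (continuous_const.add continuous_norm))).measurable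
  rw [setLIntegral_map hmeasS hf1 hmeas_ev, setLIntegral_map hmeasS' hf2 measurable_fst]
  set A := (fun q : EuclideanSpace ℝ (Fin d) × (ℝ → EuclideanSpace ℝ (Fin d)) => q.2 t)
      ⁻¹' {x | R ≤ ‖x‖} with hAdef
  set B := (Prod.fst : EuclideanSpace ℝ (Fin d) × (ℝ → EuclideanSpace ℝ (Fin d))
      → EuclideanSpace ℝ (Fin d)) ⁻¹' {x | R / C - 1 ≤ ‖x‖} with hBdef
  have hAm : MeasurableSet A := hmeas_ev hmeasS
  have hBm : MeasurableSet B := measurable_fst hmeasS'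
  calc ∫⁻ q in A, ENNReal.ofReal (‖q.2 t‖ ^ p) ∂(η ω)
      = ∫⁻ q, A.indicator (fun q => ENNReal.ofReal (‖q.2 t‖ ^ p)) q ∂(η ω) := by
        rw [lintegral_indicator hAm]
    _ ≤ ∫⁻ q, B.indicator (fun q => ENNReal.ofReal ((C * (1 + ‖q.1‖)) ^ p)) q ∂(η ω) := by
        apply lintegral_mono_ae
        filter_upwards [hchar'] with q hq
        by_cases hqA : q ∈ A
        · have hbound : ‖q.2 t‖ ≤ C * (1 + ‖q.1‖) := char_bound hτ hm hm0 (hv · ω) hq ht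
          have hqB : q ∈ B := by
            have hRle : R ≤ ‖q.2 t‖ := hqA
            have : R / C ≤ 1 + ‖q.1‖ := by
              rw [div_le_iff₀ hC0]
              calc R ≤ ‖q.2 t‖ := hRle
                _ ≤ C * (1 + ‖q.1‖) := hbound
                _ = (1 + ‖q.1‖) * C := by ring
            simp only [hBdef, Set.mem_preimage, Set.mem_setOf_eq]
            linarith
          rw [Set.indicator_of_mem hqA, Set.indicator_of_mem hqB]
          exact ENNReal.ofReal_le_ofReal
            (Real.rpow_le_rpow (norm_nonneg _) hbound hp0)
        · rw [Set.indicator_of_notMem hqA]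
          exact zero_le
    _ = ∫⁻ q in B, ENNReal.ofReal ((C * (1 + ‖q.1‖)) ^ p) ∂(η ω) := by
        rw [lintegral_indicator hBm]
    _ = ∫⁻ q in B, ENNReal.ofReal (C ^ p) * ENNReal.ofReal ((1 + ‖q.1‖) ^ p) ∂(η ω) := by
        congr 1
        ext q
        rw [Real.mul_rpow hC0.le (by positivity), ENNReal.ofReal_mul (by positivity)]
    _ = ENNReal.ofReal (C ^ p) * ∫⁻ q in B, ENNReal.ofReal ((1 + ‖q.1‖) ^ p) ∂(η ω) := by
        rw [lintegral_const_mul' _ _ ENNReal.ofReal_ne_top]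


end
end

section
/- Absolute continuity of solution curves: under |v(t,ω,x)| ≤ m(t)(1+|x|), any solution μ(·) of the structured continuity equation with μ(τ) = μ^τ ∈ P_{π,p}(Ω × ℝ^d) satisfies W_p(μ_ω(t₁), μ_ω(t₂)) ≤ (1 + M_p(μ^τ_ω))(1 + C_T) ∫_{t₁}^{t₂} m(s) ds for π-a.e. ω and all τ ≤ t₁ ≤ t₂ ≤ T, and consequently W_{π,p}(μ(t₁), μ(t₂)) ≤ (1 + M_{π,p}(μ^τ))(1 + C_T) ∫_{t₁}^{t₂} m(s) ds, so μ(·) is absolutely continuous in the fibred p-Wasserstein metric. -/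
open MeasureTheory ENNReal Filter Topology

noncomputable section

lemma key_exp_ineq {δ ε : ℝ} (hδ0 : 0 ≤ δ) (hδε : δ ≤ ε / 2) (hε1 : ε ≤ 1) :
    1 ≤ (1 - δ) * Real.exp ((1 + ε) * δ) := by
  have h1 : Real.exp ((1 + ε) * δ) = Real.exp δ * Real.exp (ε * δ) := by
    rw [← Real.exp_add]; ring_nf
  have h2 : δ + 1 ≤ Real.exp δ := Real.add_one_le_exp δ
  have h3 : ε * δ + 1 ≤ Real.exp (ε * δ) := Real.add_one_le_exp _
  have hδhalf : δ ≤ 1 / 2 := by nlinarith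
  have hε0 : 0 ≤ ε := by linarith
  have h4 : (δ + 1) * (ε * δ + 1) ≤ Real.exp δ * Real.exp (ε * δ) :=
    mul_le_mul h2 h3 (by nlinarith) (Real.exp_pos δ).le
  have h5 : (1 - δ) * ((δ + 1) * (ε * δ + 1)) ≤ (1 - δ) * (Real.exp δ * Real.exp (ε * δ)) := by
    apply mul_le_mul_of_nonneg_left h4 (by linarith)
  have hb : δ * δ ≤ ε * δ / 2 := by nlinarith
  have hc : ε * δ * (δ * δ) ≤ ε * δ * (1 / 4) := by
    apply mul_le_mul_of_nonneg_left (by nlinarith) (by positivity)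
  have key : 1 ≤ (1 - δ) * ((δ + 1) * (ε * δ + 1)) := by nlinarith
  rw [h1]; linarith


/-- Minkowski for `1 + g^{1/p}` without measurability of `g`. -/
lemma lintegral_one_add_rpow_le {Ω : Type*} [MeasurableSpace Ω] (π : Measure Ω)
    [IsProbabilityMeasure π] {p : ℝ} (hp : 1 ≤ p) (g : Ω → ℝ≥0∞) :
    (∫⁻ ω, (1 + g ω ^ (1 / p)) ^ p ∂π) ^ (1 / p) ≤ 1 + (∫⁻ ω, g ω ∂π) ^ (1 / p) := by
  have hp0 : p ≠ 0 := by positivity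
  have hip : 0 ≤ 1 / p := by positivity
  have hpinv : p * (1 / p) = 1 := by field_simp
  have hinvp : (1 / p) * p = 1 := by field_simp
  obtain ⟨φ, hφm, hφle, hφeq⟩ :=
    exists_measurable_le_lintegral_eq π (fun ω => (1 + g ω ^ (1 / p)) ^ p)
  set ψ : Ω → ℝ≥0∞ := fun ω => (φ ω ^ (1 / p) - 1) ^ p with hψ
  have hψm : Measurable ψ := ((hφm.pow_const _).sub measurable_const).pow_const _
  have hψle : ∀ ω, ψ ω ≤ g ω := by
    intro ω
    have h1 : φ ω ^ (1 / p) ≤ 1 + g ω ^ (1 / p) := by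
      calc φ ω ^ (1 / p) ≤ ((1 + g ω ^ (1 / p)) ^ p) ^ (1 / p) :=
            ENNReal.rpow_le_rpow (hφle ω) hip
        _ = 1 + g ω ^ (1 / p) := by rw [← ENNReal.rpow_mul, hpinv, ENNReal.rpow_one]
    have h2 : φ ω ^ (1 / p) - 1 ≤ g ω ^ (1 / p) := tsub_le_iff_left.2 h1
    calc ψ ω ≤ (g ω ^ (1 / p)) ^ p := ENNReal.rpow_le_rpow h2 (by positivity)
      _ = g ω := by rw [← ENNReal.rpow_mul, hinvp, ENNReal.rpow_one]
  have hφψ : ∀ ω, φ ω ≤ (1 + ψ ω ^ (1 / p)) ^ p := by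
    intro ω
    have h1 : ψ ω ^ (1 / p) = φ ω ^ (1 / p) - 1 := by
      rw [hψ, ← ENNReal.rpow_mul, hpinv, ENNReal.rpow_one]
    have h2 : φ ω ^ (1 / p) ≤ 1 + ψ ω ^ (1 / p) := by rw [h1]; exact le_add_tsub
    calc φ ω = (φ ω ^ (1 / p)) ^ p := by rw [← ENNReal.rpow_mul, hinvp, ENNReal.rpow_one]
      _ ≤ (1 + ψ ω ^ (1 / p)) ^ p := ENNReal.rpow_le_rpow h2 (by positivity)
  calc (∫⁻ ω, (1 + g ω ^ (1 / p)) ^ p ∂π) ^ (1 / p)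
      = (∫⁻ ω, φ ω ∂π) ^ (1 / p) := by rw [hφeq]
    _ ≤ (∫⁻ ω, (1 + ψ ω ^ (1 / p)) ^ p ∂π) ^ (1 / p) :=
        ENNReal.rpow_le_rpow (lintegral_mono hφψ) hip
    _ ≤ (∫⁻ ω, (1 : ℝ≥0∞) ^ p ∂π) ^ (1 / p) + (∫⁻ ω, (ψ ω ^ (1 / p)) ^ p ∂π) ^ (1 / p) :=
        ENNReal.lintegral_Lp_add_le aemeasurable_const (hψm.pow_const _).aemeasurable hp
    _ = 1 + (∫⁻ ω, ψ ω ∂π) ^ (1 / p) := by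
        simp only [ENNReal.one_rpow, lintegral_one, measure_univ,
          ← ENNReal.rpow_mul, hinvp, ENNReal.rpow_one]
    _ ≤ 1 + (∫⁻ ω, g ω ∂π) ^ (1 / p) := by
        have := lintegral_mono (μ := π) hψle
        gcongr


section GronwallAux

variable {E : Type*} [NormedAddCommGroup E] [NormedSpace ℝ E]

lemma gronwall_aux {τ T t₀ : ℝ} {m : ℝ → ℝ} {σ : ℝ → E} {g : ℝ → E} {x : E}
    (hτt₀ : τ ≤ t₀) (ht₀T : t₀ ≤ T)
    (hm_int : IntegrableOn m (Set.Icc τ T))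
    (hm0 : ∀ s, 0 ≤ m s)
    (hσc : Continuous σ)
    (hg_int : IntegrableOn g (Set.Ioc τ t₀))
    (hg_bd : ∀ s, ‖g s‖ ≤ m s * (1 + ‖σ s‖))
    (heq : ∀ t ∈ Set.Icc τ t₀, σ t = x + ∫ s in τ..t, g s) :
    ∀ t ∈ Set.Icc τ t₀, 1 + ‖σ t‖ ≤ (1 + ‖x‖) * Real.exp (∫ s in Set.Icc τ T, m s) := by
  set L : ℝ := ∫ s in Set.Icc τ T, m s with hL
  have hL0 : 0 ≤ L := setIntegral_nonneg measurableSet_Icc fun s _ => hm0 s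
  set w : ℝ → ℝ := fun s => 1 + ‖σ s‖ with hw
  have hw_cont : Continuous w := continuous_const.add hσc.norm
  have hw1 : ∀ s, 1 ≤ w s := fun s => le_add_of_nonneg_right (norm_nonneg _)
  -- integrability of m on subintervals
  have hm_int' : ∀ a b : ℝ, τ ≤ a → a ≤ b → b ≤ t₀ → IntervalIntegrable m volume a b := by
    intro a b ha hab hb
    rw [intervalIntegrable_iff_integrableOn_Ioc_of_le hab]
    exact hm_int.mono_set fun s hs =>
      ⟨le_trans ha (le_of_lt hs.1), le_trans hs.2 (hb.trans ht₀T)⟩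
  -- integrability of h = m * w
  set h : ℝ → ℝ := fun s => m s * w s with hh
  have h_int : IntegrableOn h (Set.Ioc τ t₀) := by
    obtain ⟨c, hcmem, hc⟩ := (isCompact_Icc (a := τ) (b := t₀)).exists_isMaxOn
      (Set.nonempty_Icc.2 hτt₀) hw_cont.continuousOn
    have hm_int₀ : IntegrableOn m (Set.Ioc τ t₀) :=
      hm_int.mono_set fun s hs => ⟨hs.1.le, hs.2.trans ht₀T⟩
    have : IntegrableOn (fun s => w s * m s) (Set.Ioc τ t₀) := by
      apply Integrable.bdd_mul (c := w c) hm_int₀ hw_cont.aestronglyMeasurable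
      · refine (ae_restrict_iff' measurableSet_Ioc).2 (ae_of_all _ fun s hs => ?_)
        rw [Real.norm_eq_abs, abs_of_nonneg (by linarith [hw1 s])]
        exact hc ⟨hs.1.le, hs.2⟩
    exact this.congr (ae_of_all _ fun s => mul_comm _ _)
  have hh0 : ∀ s, 0 ≤ h s := fun s => mul_nonneg (hm0 s) (by linarith [hw1 s])
  have h_int' : ∀ a b : ℝ, τ ≤ a → a ≤ b → b ≤ t₀ → IntervalIntegrable h volume a b := by
    intro a b ha hab hb
    rw [intervalIntegrable_iff_integrableOn_Ioc_of_le hab]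
    exact h_int.mono_set fun s hs => ⟨lt_of_le_of_lt ha hs.1, hs.2.trans hb⟩
  -- the majorant W
  set W : ℝ → ℝ := fun r => (1 + ‖x‖) + ∫ s in τ..r, h s with hW
  have hwW : ∀ r ∈ Set.Icc τ t₀, w r ≤ W r := by
    intro r hr
    have : σ r = x + ∫ s in τ..r, g s := heq r hr
    have hnorm : ‖∫ s in τ..r, g s‖ ≤ |∫ s in τ..r, h s| := by
      apply intervalIntegral.norm_integral_le_abs_of_norm_le
      · exact ae_of_all _ fun s => (hg_bd s)
      · exact h_int' τ r le_rfl hr.1 hr.2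
    have habs : |∫ s in τ..r, h s| = ∫ s in τ..r, h s :=
      abs_of_nonneg (intervalIntegral.integral_nonneg hr.1 fun u _ => hh0 u)
    calc w r = 1 + ‖x + ∫ s in τ..r, g s‖ := by rw [hw]; simp [this]
      _ ≤ 1 + (‖x‖ + ‖∫ s in τ..r, g s‖) := by gcongr; exact norm_add_le _ _
      _ ≤ W r := by rw [hW]; dsimp only; rw [← habs]; linarith [hnorm]
  have hWmono : ∀ a b : ℝ, τ ≤ a → a ≤ b → b ≤ t₀ → W a ≤ W b := by
    intro a b ha hab hb
    have hsplit : (∫ s in τ..a, h s) + ∫ s in a..b, h s = ∫ s in τ..b, h s :=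
      intervalIntegral.integral_add_adjacent_intervals
        (h_int' τ a le_rfl ha (hab.trans hb)) (h_int' a b ha hab hb)
    have : 0 ≤ ∫ s in a..b, h s := intervalIntegral.integral_nonneg hab fun u _ => hh0 u
    simp only [hW]; linarith [hsplit]
  have hW1 : ∀ r ∈ Set.Icc τ t₀, (1:ℝ) ≤ W r := fun r hr => (hw1 r).trans (hwW r hr)
  -- the primitive of m
  set φ : ℝ → ℝ := fun r => ∫ s in τ..r, m s with hφ
  have hφcont : ContinuousOn φ (Set.Icc τ t₀) := by
    have h1 : ContinuousOn (fun r => ∫ s in Set.Ioc τ r, m s) (Set.Icc τ t₀) :=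
      intervalIntegral.continuousOn_primitive
        (hm_int.mono_set fun s hs => ⟨hs.1, hs.2.trans ht₀T⟩)
    apply h1.congr
    intro r hr
    show (∫ s in τ..r, m s) = ∫ s in Set.Ioc τ r, m s
    rw [intervalIntegral.integral_of_le hr.1]
  have hφL : ∀ r ∈ Set.Icc τ t₀, φ r ≤ L := by
    intro r hr
    show (∫ s in τ..r, m s) ≤ ∫ s in Set.Icc τ T, m s
    rw [intervalIntegral.integral_of_le hr.1]
    apply setIntegral_mono_set hm_int (ae_of_all _ fun s => hm0 s)
    exact HasSubset.Subset.eventuallyLE fun s hs => ⟨hs.1.le, hs.2.trans (hr.2.trans ht₀T)⟩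
  have hφsub : ∀ a b : ℝ, τ ≤ a → a ≤ b → b ≤ t₀ →
      φ b - φ a = ∫ s in a..b, m s := by
    intro a b ha hab hb
    have hsplit : (∫ s in τ..a, m s) + ∫ s in a..b, m s = ∫ s in τ..b, m s :=
      intervalIntegral.integral_add_adjacent_intervals
        (hm_int' τ a le_rfl ha (hab.trans hb)) (hm_int' a b ha hab hb)
    simp only [hφ]; linarith [hsplit]
  -- main claim for fixed t
  intro t ht
  have key : ∀ ε ∈ Set.Ioc (0:ℝ) 1, w t ≤ (1 + ‖x‖) * Real.exp ((1 + ε) * L) := by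
    intro ε hε
    rcases eq_or_lt_of_le ht.1 with htτ | htτ
    · -- t = τ
      have hστ : σ t = x := by
        have h0 := heq t ht
        rw [← htτ] at h0
        rw [← htτ]
        simpa [intervalIntegral.integral_same] using h0
      have hwt : w t = 1 + ‖x‖ := by rw [hw]; dsimp only; rw [hστ]
      rw [hwt]
      have h1 : (1:ℝ) ≤ Real.exp ((1 + ε) * L) := Real.one_le_exp (by nlinarith [hε.1.le])
      nlinarith [norm_nonneg x]
    · -- τ < t ; uniform continuity of φ
      have huc := (isCompact_Icc (a := τ) (b := t₀)).uniformContinuousOn_of_continuous hφcont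
      rw [Metric.uniformContinuousOn_iff] at huc
      obtain ⟨δ, hδ0, hδ⟩ := huc (min (ε / 2) (1 / 2)) (lt_min (by linarith [hε.1]) (by norm_num))
      set n : ℕ := ⌈(t - τ) / δ⌉₊ + 1 with hn
      have hn0 : 0 < (n:ℝ) := by
        have : 0 < n := Nat.succ_pos _
        exact_mod_cast this
      have hnne : (n:ℝ) ≠ 0 := hn0.ne'
      set st : ℝ := (t - τ) / n with hst
      have hst0 : 0 < st := div_pos (by linarith) hn0
      have hstδ : st < δ := by
        rw [hst, div_lt_iff₀ hn0]
        have h1 : (t - τ) / δ ≤ ⌈(t - τ) / δ⌉₊ := Nat.le_ceil _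
        have h2 : ((⌈(t - τ) / δ⌉₊ : ℝ)) < n := by rw [hn]; push_cast; linarith
        calc t - τ = ((t - τ) / δ) * δ := by field_simp
          _ ≤ (⌈(t - τ) / δ⌉₊ : ℝ) * δ := by gcongr
          _ < n * δ := by gcongr
          _ = δ * n := mul_comm _ _
      set sp : ℕ → ℝ := fun i => τ + i * st with hsp
      have hsp_mem : ∀ i : ℕ, i ≤ n → sp i ∈ Set.Icc τ t := by
        intro i hi
        constructor
        · rw [hsp]; dsimp only
          nlinarith [mul_nonneg (Nat.cast_nonneg (α := ℝ) i) hst0.le]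
        · rw [hsp]; dsimp only
          have : (i : ℝ) ≤ n := by exact_mod_cast hi
          have h2 : (i : ℝ) * st ≤ n * st := by gcongr
          have h3 : (n : ℝ) * st = t - τ := by rw [hst]; field_simp
          linarith
      have hsp0 : sp 0 = τ := by simp [hsp]
      have hspn : sp n = t := by
        rw [hsp, hst]; dsimp only; field_simp; ring
      have hsucc : ∀ i : ℕ, sp (i + 1) = sp i + st := by
        intro i; rw [hsp]; push_cast; ring
      -- per-step increment of φ is small
      have hδi : ∀ i : ℕ, i + 1 ≤ n →
          0 ≤ φ (sp (i+1)) - φ (sp i) ∧ φ (sp (i+1)) - φ (sp i) < min (ε / 2) (1 / 2) := by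
        intro i hi
        have hmem1 := hsp_mem i (by omega)
        have hmem2 := hsp_mem (i+1) hi
        have hmem1' : sp i ∈ Set.Icc τ t₀ := ⟨hmem1.1, hmem1.2.trans ht.2⟩
        have hmem2' : sp (i+1) ∈ Set.Icc τ t₀ := ⟨hmem2.1, hmem2.2.trans ht.2⟩
        have hle : sp i ≤ sp (i+1) := by rw [hsucc]; linarith
        constructor
        · have := hφsub (sp i) (sp (i+1)) hmem1'.1 hle hmem2'.2
          rw [this]
          exact intervalIntegral.integral_nonneg hle fun u _ => hm0 u
        · have hdist : dist (sp (i+1)) (sp i) < δ := by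
            rw [Real.dist_eq, hsucc, abs_of_nonneg (by linarith)]
            simpa using hstδ
          have := hδ (sp (i+1)) hmem2' (sp i) hmem1' hdist
          rw [Real.dist_eq] at this
          calc φ (sp (i+1)) - φ (sp i) ≤ |φ (sp (i+1)) - φ (sp i)| := le_abs_self _
            _ < _ := this
      -- induction along the grid
      have hind : ∀ i : ℕ, i ≤ n → W (sp i) ≤ (1 + ‖x‖) * Real.exp ((1 + ε) * φ (sp i)) := by
        intro i
        induction i with
        | zero =>
          intro _
          rw [hsp0]
          have hWτ : W τ = 1 + ‖x‖ := by simp [hW, intervalIntegral.integral_same]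
          have hφτ : φ τ = 0 := by simp [hφ, intervalIntegral.integral_same]
          rw [hWτ, hφτ]
          simp
        | succ i ih =>
          intro hi
          have ih' := ih (by omega)
          have hmem1 := hsp_mem i (by omega)
          have hmem2 := hsp_mem (i+1) hi
          have hmem1' : sp i ∈ Set.Icc τ t₀ := ⟨hmem1.1, hmem1.2.trans ht.2⟩
          have hmem2' : sp (i+1) ∈ Set.Icc τ t₀ := ⟨hmem2.1, hmem2.2.trans ht.2⟩
          have hle : sp i ≤ sp (i+1) := by rw [hsucc]; linarith
          set a := sp i
          set b := sp (i+1)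
          set dd := φ b - φ a with hdd
          obtain ⟨hd0, hd1⟩ := hδi i hi
          have hd2 : dd ≤ ε / 2 := le_of_lt (lt_of_lt_of_le hd1 (min_le_left _ _))
          have hd3 : dd ≤ 1 / 2 := le_of_lt (lt_of_lt_of_le hd1 (min_le_right _ _))
          -- W b ≤ W a + W b * dd
          have hWab : W b = W a + ∫ s in a..b, h s := by
            have hsplit : (∫ s in τ..a, h s) + ∫ s in a..b, h s = ∫ s in τ..b, h s :=
              intervalIntegral.integral_add_adjacent_intervals
                (h_int' τ a le_rfl hmem1'.1 hmem1'.2) (h_int' a b hmem1'.1 hle hmem2'.2)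
            simp only [hW]; linarith [hsplit]
          have hIb : (∫ s in a..b, h s) ≤ W b * dd := by
            have hmono : ∀ s ∈ Set.Icc a b, h s ≤ m s * W b := by
              intro s hs
              have hsmem : s ∈ Set.Icc τ t₀ := ⟨hmem1'.1.trans hs.1, hs.2.trans hmem2'.2⟩
              have : w s ≤ W b := (hwW s hsmem).trans (hWmono s b hsmem.1 hs.2 hmem2'.2)
              exact mul_le_mul_of_nonneg_left this (hm0 s)
            calc (∫ s in a..b, h s) ≤ ∫ s in a..b, m s * W b :=
                  intervalIntegral.integral_mono_on hle
                    (h_int' a b hmem1'.1 hle hmem2'.2)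
                    ((hm_int' a b hmem1'.1 hle hmem2'.2).mul_const _) hmono
              _ = (∫ s in a..b, m s) * W b := intervalIntegral.integral_mul_const _ _
              _ = W b * dd := by rw [hdd, hφsub a b hmem1'.1 hle hmem2'.2]; ring
          have hWb1 : (1:ℝ) ≤ W b := hW1 b hmem2'
          have hWa1 : (1:ℝ) ≤ W a := hW1 a hmem1'
          have hstep : W b * (1 - dd) ≤ W a := by linarith [hWab, hIb]
          have hkey := key_exp_ineq hd0 hd2 hε.2
          have hWbexp : W b ≤ W a * Real.exp ((1 + ε) * dd) := by
            have h1 : W b * 1 ≤ W b * ((1 - dd) * Real.exp ((1 + ε) * dd)) :=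
              mul_le_mul_of_nonneg_left hkey (by linarith)
            have h2 : W b * ((1 - dd) * Real.exp ((1 + ε) * dd))
                = (W b * (1 - dd)) * Real.exp ((1 + ε) * dd) := by ring
            have h3 : (W b * (1 - dd)) * Real.exp ((1 + ε) * dd)
                ≤ W a * Real.exp ((1 + ε) * dd) :=
              mul_le_mul_of_nonneg_right hstep (Real.exp_pos _).le
            linarith [h1, h2.symm ▸ h3]
          calc W b ≤ W a * Real.exp ((1 + ε) * dd) := hWbexp
            _ ≤ ((1 + ‖x‖) * Real.exp ((1 + ε) * φ a)) * Real.exp ((1 + ε) * dd) :=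
              mul_le_mul_of_nonneg_right ih' (Real.exp_pos _).le
            _ = (1 + ‖x‖) * Real.exp ((1 + ε) * φ b) := by
              rw [mul_assoc, ← Real.exp_add]
              congr 1
              rw [hdd]; ring
      have hfinal := hind n le_rfl
      rw [hspn] at hfinal
      have ht' : t ∈ Set.Icc τ t₀ := ht
      calc w t ≤ W t := hwW t ht'
        _ ≤ (1 + ‖x‖) * Real.exp ((1 + ε) * φ t) := hfinal
        _ ≤ (1 + ‖x‖) * Real.exp ((1 + ε) * L) := by
            have h1 : φ t ≤ L := hφL t ht'
            have h2 : (1 + ε) * φ t ≤ (1 + ε) * L := by nlinarith [hε.1.le]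
            exact mul_le_mul_of_nonneg_left (Real.exp_le_exp.2 h2) (by positivity)
  -- take the limit ε → 0⁺
  have htend : Tendsto (fun ε : ℝ => (1 + ‖x‖) * Real.exp ((1 + ε) * L)) (𝓝[>] 0)
      (𝓝 ((1 + ‖x‖) * Real.exp L)) := by
    have hc : Continuous (fun ε : ℝ => (1 + ‖x‖) * Real.exp ((1 + ε) * L)) :=
      continuous_const.mul
        (Real.continuous_exp.comp ((continuous_const.add continuous_id).mul continuous_const))
    have h2 : Tendsto (fun ε : ℝ => (1 + ‖x‖) * Real.exp ((1 + ε) * L)) (𝓝[>] 0)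
        (𝓝 ((1 + ‖x‖) * Real.exp ((1 + 0) * L))) :=
      (hc.tendsto 0).mono_left nhdsWithin_le_nhds
    simpa using h2
  refine ge_of_tendsto htend ?_
  filter_upwards [Ioc_mem_nhdsGT_of_mem (Set.left_mem_Ico.2 zero_lt_one)] with ε hε
  exact key ε hε

lemma char_dist {τ T : ℝ} {m : ℝ → ℝ} {v' : ℝ → E → E} {x : E} {σ : ℝ → E}
    (hτT : τ ≤ T)
    (hm_int : IntegrableOn m (Set.Icc τ T)) (hm0 : ∀ s, 0 ≤ m s)
    (hv : ∀ s y, ‖v' s y‖ ≤ m s * (1 + ‖y‖))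
    (hchar : (x, σ) ∈ CharSet τ T v')
    {t₁ t₂ : ℝ} (ht1 : τ ≤ t₁) (h12 : t₁ ≤ t₂) (ht2 : t₂ ≤ T) :
    dist (σ t₁) (σ t₂)
      ≤ ((1 + ‖x‖) * Real.exp (∫ s in Set.Icc τ T, m s)) * ∫ s in Set.Icc t₁ t₂, m s := by
  obtain ⟨hσc, hστ, hσeq⟩ := hchar
  dsimp only at hσc hστ hσeq
  set L : ℝ := ∫ s in Set.Icc τ T, m s with hL
  have hL0 : (0:ℝ) ≤ L := setIntegral_nonneg measurableSet_Icc fun s _ => hm0 s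
  have hexp1 : (1:ℝ) ≤ Real.exp L := Real.one_le_exp hL0
  set B : ℝ := (1 + ‖x‖) * Real.exp L with hB
  have hB0 : 0 ≤ B := by positivity
  set R : ℝ := B * ∫ s in Set.Icc t₁ t₂, m s with hR
  have hR0 : 0 ≤ R := by
    apply mul_nonneg hB0
    exact setIntegral_nonneg measurableSet_Icc fun s _ => hm0 s
  set g : ℝ → E := fun s => v' s (σ s) with hg
  have hg_bd : ∀ s, ‖g s‖ ≤ m s * (1 + ‖σ s‖) := fun s => hv s (σ s)
  -- the set of good times
  set S : Set ℝ := {t | t ∈ Set.Icc τ T ∧ IntegrableOn g (Set.Ioc τ t)} with hS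
  have hτS : τ ∈ S := ⟨⟨le_rfl, hτT⟩, by rw [Set.Ioc_self]; exact integrableOn_empty⟩
  have hSne : S.Nonempty := ⟨τ, hτS⟩
  have hSbdd : BddAbove S := ⟨T, fun t htS => htS.1.2⟩
  set ts : ℝ := sSup S with hts
  have htsτ : τ ≤ ts := le_csSup hSbdd hτS
  have htsT : ts ≤ T := csSup_le hSne fun t htS => htS.1.2
  have hm_int' : ∀ a b : ℝ, τ ≤ a → a ≤ b → b ≤ T → IntervalIntegrable m volume a b := by
    intro a b ha hab hb
    rw [intervalIntegrable_iff_integrableOn_Ioc_of_le hab]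
    exact hm_int.mono_set fun s hs => ⟨le_trans ha (le_of_lt hs.1), le_trans hs.2 hb⟩
  -- global a priori bound
  have hBnd : ∀ t ∈ Set.Icc τ T, 1 + ‖σ t‖ ≤ B := by
    intro t htIcc
    rcases lt_or_ge t ts with hcase | hcase
    · obtain ⟨t₀, ht₀S, htt₀⟩ := exists_lt_of_lt_csSup hSne hcase
      exact gronwall_aux ht₀S.1.1 ht₀S.1.2 hm_int hm0 hσc ht₀S.2 hg_bd
        (fun r hr => hσeq r ⟨hr.1, hr.2.trans ht₀S.1.2⟩) t ⟨htIcc.1, htt₀.le⟩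
    · rcases eq_or_lt_of_le hcase with hteq | htgt
      · -- t = ts : left limit (or t = τ)
        rcases eq_or_lt_of_le htIcc.1 with hτt | hτt
        · rw [← hτt, hστ, hB]
          nlinarith [norm_nonneg x]
        · -- τ < t = ts
          have htend : Tendsto (fun r => 1 + ‖σ r‖) (𝓝[<] t) (𝓝 (1 + ‖σ t‖)) :=
            ((continuous_const.add hσc.norm).tendsto t).mono_left nhdsWithin_le_nhds
          refine le_of_tendsto htend ?_
          filter_upwards [Ico_mem_nhdsLT_of_mem (Set.right_mem_Ioc.2 hτt)] with r hr
          obtain ⟨t₀, ht₀S, htt₀⟩ := exists_lt_of_lt_csSup hSne (hteq ▸ hr.2)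
          exact gronwall_aux ht₀S.1.1 ht₀S.1.2 hm_int hm0 hσc ht₀S.2 hg_bd
            (fun r' hr' => hσeq r' ⟨hr'.1, hr'.2.trans ht₀S.1.2⟩) r ⟨hr.1, htt₀.le⟩
      · -- ts < t : σ t = x
        have hnotS : t ∉ S := fun htS => absurd (le_csSup hSbdd htS) (not_le.2 htgt)
        have hnoint : ¬ IntegrableOn g (Set.Ioc τ t) := fun hint => hnotS ⟨htIcc, hint⟩
        have : σ t = x := by
          have h0 := hσeq t htIcc
          rw [intervalIntegral.integral_undef (by
            rw [intervalIntegrable_iff_integrableOn_Ioc_of_le htIcc.1]; exact hnoint)] at h0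
          simpa using h0
        rw [this, hB]
        nlinarith [norm_nonneg x]
  -- σ is constantly x after ts
  have hafter : ∀ t ∈ Set.Icc τ T, ts < t → σ t = x := by
    intro t htIcc htgt
    have hnotS : t ∉ S := fun htS => absurd (le_csSup hSbdd htS) (not_le.2 htgt)
    have hnoint : ¬ IntegrableOn g (Set.Ioc τ t) := fun hint => hnotS ⟨htIcc, hint⟩
    have h0 := hσeq t htIcc
    rw [intervalIntegral.integral_undef (by
      rw [intervalIntegrable_iff_integrableOn_Ioc_of_le htIcc.1]; exact hnoint)] at h0
    simpa using h0
  -- distance estimate for t < ts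
  have hDlt : ∀ t, t₁ ≤ t → t ≤ t₂ → t < ts → dist (σ t₁) (σ t) ≤ R := by
    intro t htt1 htt2 htts
    obtain ⟨t₀, ht₀S, htt₀⟩ := exists_lt_of_lt_csSup hSne htts
    have ht₀T' : t₀ ≤ T := ht₀S.1.2
    have hg_int' : ∀ a b : ℝ, τ ≤ a → a ≤ b → b ≤ t₀ → IntervalIntegrable g volume a b := by
      intro a b ha hab hb
      rw [intervalIntegrable_iff_integrableOn_Ioc_of_le hab]
      exact ht₀S.2.mono_set fun s hs => ⟨lt_of_le_of_lt ha hs.1, hs.2.trans hb⟩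
    have ht1t : τ ≤ t := ht1.trans htt1
    have hsplit : (∫ s in τ..t₁, g s) + ∫ s in t₁..t, g s = ∫ s in τ..t, g s :=
      intervalIntegral.integral_add_adjacent_intervals
        (hg_int' τ t₁ le_rfl ht1 (htt1.trans htt₀.le)) (hg_int' t₁ t ht1 htt1 htt₀.le)
    have heq1 := hσeq t₁ ⟨ht1, h12.trans ht2⟩
    have heq2 := hσeq t ⟨ht1t, htt2.trans ht2⟩
    have hdiff : σ t - σ t₁ = ∫ s in t₁..t, g s := by
      rw [heq1, heq2]; rw [← hsplit]; abel
    have hnorm : ‖∫ s in t₁..t, g s‖ ≤ |∫ s in t₁..t, m s * B| := by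
      apply intervalIntegral.norm_integral_le_abs_of_norm_le
      · rw [Set.uIoc_of_le htt1]
        refine (ae_restrict_iff' measurableSet_Ioc).2 (ae_of_all _ fun s hs => ?_)
        calc ‖g s‖ ≤ m s * (1 + ‖σ s‖) := hg_bd s
          _ ≤ m s * B := by
            apply mul_le_mul_of_nonneg_left _ (hm0 s)
            exact hBnd s ⟨ht1.trans hs.1.le, hs.2.trans (htt2.trans ht2)⟩
      · exact (hm_int' t₁ t ht1 htt1 (htt2.trans ht2)).mul_const _
    have habs : |∫ s in t₁..t, m s * B| = (∫ s in t₁..t, m s) * B := by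
      rw [intervalIntegral.integral_mul_const]
      apply abs_of_nonneg
      apply mul_nonneg _ hB0
      exact intervalIntegral.integral_nonneg htt1 fun u _ => hm0 u
    have hsub : (∫ s in t₁..t, m s) ≤ ∫ s in Set.Icc t₁ t₂, m s := by
      rw [intervalIntegral.integral_of_le htt1]
      apply setIntegral_mono_set (hm_int.mono_set ?_) (ae_of_all _ fun s => hm0 s)
      · exact HasSubset.Subset.eventuallyLE fun s hs => ⟨hs.1.le, hs.2.trans htt2⟩
      · intro s hs; exact ⟨ht1.trans hs.1, hs.2.trans ht2⟩
    calc dist (σ t₁) (σ t) = ‖σ t - σ t₁‖ := by rw [dist_comm, dist_eq_norm]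
      _ = ‖∫ s in t₁..t, g s‖ := by rw [hdiff]
      _ ≤ |∫ s in t₁..t, m s * B| := hnorm
      _ = (∫ s in t₁..t, m s) * B := habs
      _ ≤ (∫ s in Set.Icc t₁ t₂, m s) * B := mul_le_mul_of_nonneg_right hsub hB0
      _ = R := by rw [hR]; ring
  -- distance estimate for t ≤ ts
  have hDle : ∀ t, t₁ ≤ t → t ≤ t₂ → t ≤ ts → dist (σ t₁) (σ t) ≤ R := by
    intro t htt1 htt2 htts
    rcases lt_or_eq_of_le htts with hlt | heqs
    · exact hDlt t htt1 htt2 hlt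
    · rcases eq_or_lt_of_le htt1 with ht1t | ht1t
      · rw [← ht1t]; simpa using hR0
      · have htend : Tendsto (fun r => dist (σ t₁) (σ r)) (𝓝[<] t) (𝓝 (dist (σ t₁) (σ t))) :=
          ((continuous_const.dist hσc).tendsto t).mono_left nhdsWithin_le_nhds
        refine le_of_tendsto htend ?_
        filter_upwards [Ico_mem_nhdsLT_of_mem (Set.right_mem_Ioc.2 ht1t)] with r hr
        exact hDlt r hr.1 (hr.2.le.trans htt2) (heqs ▸ hr.2)
  -- conclusion
  rcases le_or_gt t₂ ts with hc | hc
  · exact hDle t₂ h12 le_rfl hc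
  · have hσt₂ : σ t₂ = x := hafter t₂ ⟨ht1.trans h12, ht2⟩ hc
    rcases le_or_gt t₁ ts with hc1 | hc1
    · -- σ ts = x by right continuity
      have hσts : σ ts = x := by
        have htend : Tendsto σ (𝓝[>] ts) (𝓝 (σ ts)) :=
          (hσc.tendsto ts).mono_left nhdsWithin_le_nhds
        have htend2 : Tendsto σ (𝓝[>] ts) (𝓝 x) := by
          apply Tendsto.congr' _ tendsto_const_nhds
          filter_upwards [Ioc_mem_nhdsGT_of_mem (Set.left_mem_Ico.2 hc)] with r hr
          exact (hafter r ⟨htsτ.trans hr.1.le, hr.2.trans ht2⟩ hr.1).symm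
        exact tendsto_nhds_unique htend htend2
      calc dist (σ t₁) (σ t₂) = dist (σ t₁) (σ ts) := by rw [hσt₂, hσts]
        _ ≤ R := hDle ts hc1 hc.le le_rfl
    · have hσt₁ : σ t₁ = x := hafter t₁ ⟨ht1, h12.trans ht2⟩ hc1
      rw [hσt₁, hσt₂]
      simpa using hR0

end GronwallAux

/-- **absolute continuity of solution curves.** Under
`|v(t,ω,x)| ≤ m(t)(1+|x|)`, any solution `μ(·)` of the structured continuity equation
with `μ(τ) = μ^τ ∈ P_{π,p}(Ω × ℝ^d)` (represented by superposition measures `η_ω`)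
satisfies, with `C_T = max{1,‖m‖₁} exp(‖m‖₁)`:
`W_p(μ_ω(t₁), μ_ω(t₂)) ≤ (1 + M_p(μ^τ_ω))(1 + C_T) ∫_{t₁}^{t₂} m` for `π`-a.e. `ω` and
all `τ ≤ t₁ ≤ t₂ ≤ T`, and consequently
`W_{π,p}(μ(t₁), μ(t₂)) ≤ (1 + M_{π,p}(μ^τ))(1 + C_T) ∫_{t₁}^{t₂} m`,
i.e. `μ(·)` is absolutely continuous in the fibred `p`-Wasserstein metric. -/
theorem stmt_14
    {Ω : Type*} [MeasurableSpace Ω] {d : ℕ}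
    (p τ T : ℝ) (hp : 1 ≤ p) (hτ : 0 ≤ τ) (hτT : τ ≤ T)
    (π : Measure Ω) [IsProbabilityMeasure π]
    (v : ℝ → Ω → EuclideanSpace ℝ (Fin d) → EuclideanSpace ℝ (Fin d))
    (m : ℝ → ℝ) (hm : IntegrableOn m (Set.Icc 0 T)) (hm0 : ∀ t, 0 ≤ m t)
    (hv : ∀ t ω x, ‖v t ω x‖ ≤ m t * (1 + ‖x‖))
    (η : Ω → Measure (EuclideanSpace ℝ (Fin d) × (ℝ → EuclideanSpace ℝ (Fin d))))
    (μτ : Ω → Measure (EuclideanSpace ℝ (Fin d)))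
    (μ : ℝ → Ω → Measure (EuclideanSpace ℝ (Fin d)))
    (hμτm : fibredMomentP p π μτ ≠ ∞)
    (hη : ∀ᵐ ω ∂π, IsProbabilityMeasure (η ω)
      ∧ (η ω) (CharSet τ T (fun s => v s ω))ᶜ = 0
      ∧ (η ω).map Prod.fst = μτ ω
      ∧ ∀ t ∈ Set.Icc τ T, (η ω).map (fun q => q.2 t) = μ t ω) :
    (∀ᵐ ω ∂π, ∀ t₁ t₂ : ℝ, τ ≤ t₁ → t₁ ≤ t₂ → t₂ ≤ T →
      Wp p (μ t₁ ω) (μ t₂ ω)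
        ≤ (1 + (∫⁻ x, ENNReal.ofReal (‖x‖ ^ p) ∂(μτ ω)) ^ (1 / p))
          * ENNReal.ofReal
              ((1 + max 1 (∫ s in Set.Icc τ T, m s)
                  * Real.exp (∫ s in Set.Icc τ T, m s))
                * ∫ s in Set.Icc t₁ t₂, m s))
    ∧ (∀ t₁ t₂ : ℝ, τ ≤ t₁ → t₁ ≤ t₂ → t₂ ≤ T →
      fibredWp p π (μ t₁) (μ t₂)
        ≤ (1 + (fibredMomentP p π μτ) ^ (1 / p))
          * ENNReal.ofReal
              ((1 + max 1 (∫ s in Set.Icc τ T, m s)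
                  * Real.exp (∫ s in Set.Icc τ T, m s))
                * ∫ s in Set.Icc t₁ t₂, m s)) := by
  have hp0 : (0:ℝ) < p := lt_of_lt_of_le zero_lt_one hp
  have hip0 : (0:ℝ) ≤ 1 / p := by positivity
  have hp0' : (0:ℝ) ≤ p := hp0.le
  have hpinv : p * (1 / p) = 1 := by field_simp
  set L : ℝ := ∫ s in Set.Icc τ T, m s with hLdef
  have hm_int : IntegrableOn m (Set.Icc τ T) :=
    hm.mono_set fun s hs => ⟨hτ.trans hs.1, hs.2⟩
  have hL0 : 0 ≤ L := setIntegral_nonneg measurableSet_Icc fun s _ => hm0 s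
  have hCbnd : Real.exp L ≤ 1 + max 1 L * Real.exp L := by
    nlinarith [Real.exp_pos L, le_max_left 1 L]
  have hC0 : 0 ≤ 1 + max 1 L * Real.exp L := by positivity
  -- measurable evaluation maps
  have hev : ∀ t : ℝ, Measurable fun q : EuclideanSpace ℝ (Fin d) × (ℝ → EuclideanSpace ℝ (Fin d)) => q.2 t :=
    fun t => (measurable_pi_apply t).comp measurable_snd
  have hcost : Measurable fun z : EuclideanSpace ℝ (Fin d) × EuclideanSpace ℝ (Fin d) => ENNReal.ofReal (dist z.1 z.2 ^ p) :=
    ENNReal.measurable_ofReal.comp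
      ((Real.continuous_rpow_const hp0').measurable.comp measurable_dist)
  have hmomMeas : Measurable fun x : EuclideanSpace ℝ (Fin d) => ENNReal.ofReal (‖x‖ ^ p) :=
    ENNReal.measurable_ofReal.comp
      ((Real.continuous_rpow_const hp0').measurable.comp measurable_norm)
  -- Part 1
  have main1 : ∀ᵐ ω ∂π, ∀ t₁ t₂ : ℝ, τ ≤ t₁ → t₁ ≤ t₂ → t₂ ≤ T →
      Wp p (μ t₁ ω) (μ t₂ ω)
        ≤ (1 + (∫⁻ x, ENNReal.ofReal (‖x‖ ^ p) ∂(μτ ω)) ^ (1 / p))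
          * ENNReal.ofReal ((1 + max 1 L * Real.exp L) * ∫ s in Set.Icc t₁ t₂, m s) := by
    filter_upwards [hη] with ω hω
    obtain ⟨hprob, hconc, hfst, hmapt⟩ := hω
    haveI := hprob
    intro t₁ t₂ h1 h12 h2
    set K : ℝ := (1 + max 1 L * Real.exp L) * ∫ s in Set.Icc t₁ t₂, m s with hKdef
    have hI0 : 0 ≤ ∫ s in Set.Icc t₁ t₂, m s :=
      setIntegral_nonneg measurableSet_Icc fun s _ => hm0 s
    have hK0 : 0 ≤ K := mul_nonneg hC0 hI0
    have hae : ∀ᵐ q ∂(η ω), q ∈ CharSet τ T (fun s => v s ω) := by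
      rw [MeasureTheory.ae_iff, ← Set.compl_def]; exact hconc
    set f : (EuclideanSpace ℝ (Fin d) × (ℝ → EuclideanSpace ℝ (Fin d))) → (EuclideanSpace ℝ (Fin d) × EuclideanSpace ℝ (Fin d)) := fun q => (q.2 t₁, q.2 t₂) with hfdef
    have hfmeas : Measurable f := (hev t₁).prodMk (hev t₂)
    have hγc : (η ω).map f ∈ Couplings (μ t₁ ω) (μ t₂ ω) := by
      constructor
      · rw [Measure.map_map measurable_fst hfmeas]
        simpa [hfdef, Function.comp_def] using hmapt t₁ ⟨h1, h12.trans h2⟩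
      · rw [Measure.map_map measurable_snd hfmeas]
        simpa [hfdef, Function.comp_def] using hmapt t₂ ⟨h1.trans h12, h2⟩
    -- step 1 : Wp ≤ cost of our coupling
    have hWp1 : Wp p (μ t₁ ω) (μ t₂ ω)
        ≤ (∫⁻ q, ENNReal.ofReal (dist (q.2 t₁) (q.2 t₂) ^ p) ∂(η ω)) ^ (1 / p) := by
      apply ENNReal.rpow_le_rpow _ hip0
      have h0 : transportCost (fun x y => ENNReal.ofReal (dist x y ^ p)) (μ t₁ ω) (μ t₂ ω)
          ≤ ∫⁻ z, ENNReal.ofReal (dist z.1 z.2 ^ p) ∂((η ω).map f) := by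
        apply iInf₂_le _ hγc
      rw [lintegral_map hcost hfmeas] at h0
      exact h0
    -- step 2 : pointwise bound of the cost
    have hptwise : ∀ᵐ q ∂(η ω), ENNReal.ofReal (dist (q.2 t₁) (q.2 t₂) ^ p)
        ≤ ENNReal.ofReal K ^ p * (1 + ENNReal.ofReal ‖q.1‖) ^ p := by
      filter_upwards [hae] with q hq
      have hd : dist (q.2 t₁) (q.2 t₂) ≤ (1 + ‖q.1‖) * K := by
        have h0 := char_dist (m := m) hτT hm_int hm0 (fun s y => hv s ω y) hq h1 h12 h2
        calc dist (q.2 t₁) (q.2 t₂)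
            ≤ ((1 + ‖q.1‖) * Real.exp L) * ∫ s in Set.Icc t₁ t₂, m s := h0
          _ ≤ ((1 + ‖q.1‖) * (1 + max 1 L * Real.exp L)) * ∫ s in Set.Icc t₁ t₂, m s := by
              apply mul_le_mul_of_nonneg_right _ hI0
              apply mul_le_mul_of_nonneg_left hCbnd (by positivity)
          _ = (1 + ‖q.1‖) * K := by rw [hKdef]; ring
      have hdp : dist (q.2 t₁) (q.2 t₂) ^ p ≤ ((1 + ‖q.1‖) * K) ^ p :=
        Real.rpow_le_rpow dist_nonneg hd hp0'
      calc ENNReal.ofReal (dist (q.2 t₁) (q.2 t₂) ^ p)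
          ≤ ENNReal.ofReal (((1 + ‖q.1‖) * K) ^ p) := ENNReal.ofReal_le_ofReal hdp
        _ = ENNReal.ofReal (K ^ p * (1 + ‖q.1‖) ^ p) := by
            rw [Real.mul_rpow (by positivity) hK0, mul_comm]
        _ = ENNReal.ofReal (K ^ p) * ENNReal.ofReal ((1 + ‖q.1‖) ^ p) := by
            rw [ENNReal.ofReal_mul (by positivity)]
        _ = ENNReal.ofReal K ^ p * (1 + ENNReal.ofReal ‖q.1‖) ^ p := by
            rw [← ENNReal.ofReal_rpow_of_nonneg hK0 hp0',
              ← ENNReal.ofReal_rpow_of_nonneg (by positivity) hp0',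
              ENNReal.ofReal_add zero_le_one (norm_nonneg _), ENNReal.ofReal_one]
    -- step 3 : integrate
    have hint : (∫⁻ q, ENNReal.ofReal (dist (q.2 t₁) (q.2 t₂) ^ p) ∂(η ω))
        ≤ ENNReal.ofReal K ^ p * ∫⁻ q, (1 + ENNReal.ofReal ‖q.1‖) ^ p ∂(η ω) := by
      calc (∫⁻ q, ENNReal.ofReal (dist (q.2 t₁) (q.2 t₂) ^ p) ∂(η ω))
          ≤ ∫⁻ q, ENNReal.ofReal K ^ p * (1 + ENNReal.ofReal ‖q.1‖) ^ p ∂(η ω) :=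
            lintegral_mono_ae hptwise
        _ = _ := lintegral_const_mul' _ _
            (ENNReal.rpow_ne_top_of_nonneg hp0' ENNReal.ofReal_ne_top)
    -- step 4 : Minkowski on the fibre
    have hmink : (∫⁻ q, (1 + ENNReal.ofReal ‖q.1‖) ^ p ∂(η ω)) ^ (1 / p)
        ≤ 1 + (∫⁻ x, ENNReal.ofReal (‖x‖ ^ p) ∂(μτ ω)) ^ (1 / p) := by
      have h0 := ENNReal.lintegral_Lp_add_le (μ := η ω)
        (f := fun _ => (1:ℝ≥0∞)) (g := fun q => ENNReal.ofReal ‖q.1‖)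
        aemeasurable_const
        (measurable_norm.ennreal_ofReal.comp measurable_fst).aemeasurable hp
      have h1' : (∫⁻ _, (1:ℝ≥0∞) ^ p ∂(η ω)) ^ (1 / p) = 1 := by
        simp
      have h2' : (∫⁻ q, ENNReal.ofReal ‖q.1‖ ^ p ∂(η ω)) ^ (1 / p)
          = (∫⁻ x, ENNReal.ofReal (‖x‖ ^ p) ∂(μτ ω)) ^ (1 / p) := by
        congr 1
        rw [← hfst, lintegral_map hmomMeas measurable_fst]
        congr 1
        ext q
        rw [ENNReal.ofReal_rpow_of_nonneg (norm_nonneg _) hp0']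
      rw [h1', h2'] at h0
      exact h0
    -- combine
    calc Wp p (μ t₁ ω) (μ t₂ ω)
        ≤ (∫⁻ q, ENNReal.ofReal (dist (q.2 t₁) (q.2 t₂) ^ p) ∂(η ω)) ^ (1 / p) := hWp1
      _ ≤ (ENNReal.ofReal K ^ p * ∫⁻ q, (1 + ENNReal.ofReal ‖q.1‖) ^ p ∂(η ω)) ^ (1 / p) :=
          ENNReal.rpow_le_rpow hint hip0
      _ = ENNReal.ofReal K * (∫⁻ q, (1 + ENNReal.ofReal ‖q.1‖) ^ p ∂(η ω)) ^ (1 / p) := by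
          rw [ENNReal.mul_rpow_of_nonneg _ _ hip0, ← ENNReal.rpow_mul, hpinv, ENNReal.rpow_one]
      _ ≤ ENNReal.ofReal K * (1 + (∫⁻ x, ENNReal.ofReal (‖x‖ ^ p) ∂(μτ ω)) ^ (1 / p)) := by
          exact mul_le_mul_right hmink _
      _ = (1 + (∫⁻ x, ENNReal.ofReal (‖x‖ ^ p) ∂(μτ ω)) ^ (1 / p)) * ENNReal.ofReal K :=
          mul_comm _ _
  refine ⟨main1, ?_⟩
  -- Part 2
  intro t₁ t₂ h1 h12 h2
  set K : ℝ := (1 + max 1 L * Real.exp L) * ∫ s in Set.Icc t₁ t₂, m s with hKdef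
  set g : Ω → ℝ≥0∞ := fun ω => ∫⁻ x, ENNReal.ofReal (‖x‖ ^ p) ∂(μτ ω) with hgdef
  have hae2 : ∀ᵐ ω ∂π, Wp p (μ t₁ ω) (μ t₂ ω) ^ p
      ≤ (1 + g ω ^ (1 / p)) ^ p * ENNReal.ofReal K ^ p := by
    filter_upwards [main1] with ω hω
    have h0 := hω t₁ t₂ h1 h12 h2
    calc Wp p (μ t₁ ω) (μ t₂ ω) ^ p
        ≤ ((1 + g ω ^ (1 / p)) * ENNReal.ofReal K) ^ p := ENNReal.rpow_le_rpow h0 hp0'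
      _ = (1 + g ω ^ (1 / p)) ^ p * ENNReal.ofReal K ^ p :=
          ENNReal.mul_rpow_of_nonneg _ _ hp0'
  have hint2 : (∫⁻ ω, Wp p (μ t₁ ω) (μ t₂ ω) ^ p ∂π)
      ≤ (∫⁻ ω, (1 + g ω ^ (1 / p)) ^ p ∂π) * ENNReal.ofReal K ^ p := by
    calc (∫⁻ ω, Wp p (μ t₁ ω) (μ t₂ ω) ^ p ∂π)
        ≤ ∫⁻ ω, (1 + g ω ^ (1 / p)) ^ p * ENNReal.ofReal K ^ p ∂π := lintegral_mono_ae hae2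
      _ = _ := lintegral_mul_const' _ _
          (ENNReal.rpow_ne_top_of_nonneg hp0' ENNReal.ofReal_ne_top)
  calc fibredWp p π (μ t₁) (μ t₂)
      = (∫⁻ ω, Wp p (μ t₁ ω) (μ t₂ ω) ^ p ∂π) ^ (1 / p) := rfl
    _ ≤ ((∫⁻ ω, (1 + g ω ^ (1 / p)) ^ p ∂π) * ENNReal.ofReal K ^ p) ^ (1 / p) :=
        ENNReal.rpow_le_rpow hint2 hip0
    _ = (∫⁻ ω, (1 + g ω ^ (1 / p)) ^ p ∂π) ^ (1 / p) * ENNReal.ofReal K := by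
        rw [ENNReal.mul_rpow_of_nonneg _ _ hip0, ← ENNReal.rpow_mul, hpinv, ENNReal.rpow_one]
    _ ≤ (1 + (∫⁻ ω, g ω ∂π) ^ (1 / p)) * ENNReal.ofReal K :=
        mul_le_mul_left (lintegral_one_add_rpow_le π hp g) _
    _ = (1 + (fibredMomentP p π μτ) ^ (1 / p)) * ENNReal.ofReal K := rfl

end
end
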